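/- arXiv:1401.0557 — 7 statements merged into one kernel-verified Lean document; each statement's English description precedes it below -/
import Mathlib

section
/- Let α < α' be real numbers and let k = (k^{(n)})_{n≥0} satisfy ‖k‖_{α'} < ∞. Then the sequence Bk satisfies ‖Bk‖_α ≤ (1/(e(α'−α))) (⟨a⁻⟩ e^{−α'} + ⟨a⁺⟩) ‖k‖_{α'}; moreover ‖A₀k‖_α ≤ (m/(e(α'−α))) ‖k‖_{α'}. In particular, both A₀ and B define bounded linear operators from K_{α'} to K_α. -/
open MeasureTheory Filter Set Topology
open scoped ENNReal

noncomputable section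

abbrev Rd (d : ℕ) := Fin d → ℝ

/-- sequences `k = (k^{(n)})_{n ≥ 0}` of functions on finite configurations -/
abbrev CorrSeq (d : ℕ) := (n : ℕ) → (Fin n → Rd d) → ℝ

/-- the norm `‖k‖_α = sup_n e^{nα} ‖k^{(n)}‖_{L^∞}`, with values in `ℝ≥0∞`. -/
def knorm {d : ℕ} (α : ℝ) (k : CorrSeq d) : ℝ≥0∞ :=
  ⨆ n : ℕ, ENNReal.ofReal (Real.exp (n * α)) * eLpNorm (k n) ⊤ volume

/-- each component is measurable, essentially bounded and symmetric -/
def IsCorrFun {d : ℕ} (k : CorrSeq d) : Prop :=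
  ∀ n : ℕ, AEStronglyMeasurable (k n) volume ∧ eLpNorm (k n) ⊤ volume < ⊤ ∧
    ∀ (σ : Equiv.Perm (Fin n)) (x : Fin n → Rd d), k n (x ∘ σ) = k n x

/-- `(A₀k)^{(n)} = -mn k^{(n)}` -/
def A0 {d : ℕ} (m : ℝ) (k : CorrSeq d) : CorrSeq d :=
  fun n x => -(m * n) * k n x

/-- the operator `B` -/
def Bop {d : ℕ} (ap am : Rd d → ℝ) (k : CorrSeq d) : CorrSeq d :=
  fun n x =>
    (- ∫ y : Rd d, (∑ i, am (y - x i)) * k (n + 1) (Fin.snoc x y))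
      + ∑ i, ∫ y : Rd d, ap (x i - y) * k n (Function.update x i y)

/-- the operator `C` -/
def Cop {d : ℕ} (ap am : Rd d → ℝ) (k : CorrSeq d) : CorrSeq d :=
  fun n => match n with
  | 0 => fun _ => 0
  | n + 1 => fun x =>
      (-(∑ i, ∑ j ∈ Finset.univ.erase i, am (x i - x j))) * k (n + 1) x
        + ∑ i : Fin (n + 1),
            (∑ j ∈ Finset.univ.erase i, ap (x i - x j)) * k n (x ∘ i.succAbove)

/-! Integrating a bounded function against a nonnegative kernel costs at most the kernel's
mass, so `‖(Bk)^{(n)}‖ ≤ n (⟨a⁻⟩ ‖k^{(n+1)}‖ + ⟨a⁺⟩ ‖k^{(n)}‖)` and `‖(A₀k)^{(n)}‖ = m n ‖k^{(n)}‖`.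
Since `‖k^{(n)}‖ ≤ e^{-nα'} ‖k‖_{α'}`, weighting by `e^{nα}` leaves the factor
`n e^{-n(α'-α)}`, which is at most `1 / (e (α'-α))` because `x ≤ e^{x-1}`. -/

theorem Real.mul_exp_neg_mul_le {c : ℝ} (hc : 0 < c) (x : ℝ) :
    x * Real.exp (-(x * c)) ≤ 1 / (Real.exp 1 * c) := by
  have key : x * c ≤ Real.exp (x * c - 1) := by linarith [Real.add_one_le_exp (x * c - 1)]
  rw [le_div_iff₀ (by positivity)]
  calc x * Real.exp (-(x * c)) * (Real.exp 1 * c)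
      = x * c * Real.exp (1 - x * c) := by rw [sub_eq_add_neg, Real.exp_add]; ring
    _ ≤ Real.exp (x * c - 1) * Real.exp (1 - x * c) := by gcongr
    _ = 1 := by rw [← Real.exp_add]; simp

theorem enorm_integral_mul_le {X : Type*} [MeasurableSpace X] {μ : Measure X} {w g : X → ℝ}
    (hw : Integrable w μ) (hw₀ : 0 ≤ᵐ[μ] w) {C : ℝ≥0∞} (hg : ∀ᵐ y ∂μ, ‖g y‖ₑ ≤ C) :
    ‖∫ y, w y * g y ∂μ‖ₑ ≤ ENNReal.ofReal (∫ y, w y ∂μ) * C := by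
  have hw_enorm : ∀ᵐ y ∂μ, ‖w y‖ₑ = ENNReal.ofReal (w y) := by
    filter_upwards [hw₀] with y hy using Real.enorm_eq_ofReal hy
  calc ‖∫ y, w y * g y ∂μ‖ₑ
      ≤ ∫⁻ y, ‖w y‖ₑ * ‖g y‖ₑ ∂μ := by
        simpa only [enorm_mul] using
          enorm_integral_le_lintegral_enorm (μ := μ) (fun y => w y * g y)
    _ ≤ ∫⁻ y, ENNReal.ofReal (w y) * C ∂μ := by
        refine lintegral_mono_ae ?_
        filter_upwards [hw_enorm, hg] with y hwy hgy
        rw [hwy]; gcongr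
    _ = ENNReal.ofReal (∫ y, w y ∂μ) * C := by
        rw [lintegral_mul_const'' _ hw.1.aemeasurable.ennreal_ofReal,
          ofReal_integral_eq_lintegral_ofReal hw hw₀]

theorem ae_enorm_le_eLpNorm_top {X F : Type*} [MeasurableSpace X] {μ : Measure X}
    [NormedAddCommGroup F] (f : X → F) : ∀ᵐ x ∂μ, ‖f x‖ₑ ≤ eLpNorm f ⊤ μ := by
  simpa only [eLpNorm_exponent_top] using enorm_ae_le_eLpNormEssSup f μ

section Slices

variable {E : Type*} [MeasureSpace E] [SigmaFinite (volume : Measure E)] {n : ℕ}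

theorem ae_ae_insertNth (i : Fin (n + 1)) {P : (Fin (n + 1) → E) → Prop}
    (h : ∀ᵐ z, P z) : ∀ᵐ x : Fin n → E, ∀ᵐ y : E, P (i.insertNth y x) := by
  have hprod : ∀ᵐ p ∂(volume : Measure E).prod volume, P (i.insertNth p.1 p.2) := by
    rw [← Measure.volume_eq_prod]
    simpa [MeasurableEquiv.piFinSuccAbove, Fin.insertNthEquiv] using
      (volume_preserving_piFinSuccAbove (fun _ => E) i).symm.quasiMeasurePreserving.ae h
  exact Measure.ae_ae_of_ae_prod
    (Measure.measurePreserving_swap.quasiMeasurePreserving.ae hprod)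

theorem quasiMeasurePreserving_removeNth (i : Fin (n + 1)) :
    Measure.QuasiMeasurePreserving (i.removeNth (α := fun _ => E)) volume volume := by
  have hsnd : Measure.QuasiMeasurePreserving Prod.snd
      (volume : Measure (E × (Fin n → E))) volume := by
    rw [Measure.volume_eq_prod]; exact Measure.quasiMeasurePreserving_snd
  exact hsnd.comp (volume_preserving_piFinSuccAbove (fun _ => E) i).quasiMeasurePreserving

theorem ae_ae_update (i : Fin (n + 1)) {P : (Fin (n + 1) → E) → Prop}
    (h : ∀ᵐ z, P z) : ∀ᵐ x : Fin (n + 1) → E, ∀ᵐ y : E, P (Function.update x i y) := by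
  filter_upwards [(quasiMeasurePreserving_removeNth i).ae (ae_ae_insertNth i h)] with x hx
  simpa only [Fin.insertNth_removeNth] using hx

end Slices

theorem eLpNorm_top_le_knorm {d : ℕ} (α : ℝ) (k : CorrSeq d) (n : ℕ) :
    eLpNorm (k n) ⊤ volume ≤ ENNReal.ofReal (Real.exp (-(n * α))) * knorm α k := by
  have h : ENNReal.ofReal (Real.exp (n * α)) * eLpNorm (k n) ⊤ volume ≤ knorm α k :=
    le_iSup (fun n : ℕ => ENNReal.ofReal (Real.exp (n * α)) * eLpNorm (k n) ⊤ volume) n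
  calc eLpNorm (k n) ⊤ volume
      = ENNReal.ofReal (Real.exp (-(n * α))) *
          (ENNReal.ofReal (Real.exp (n * α)) * eLpNorm (k n) ⊤ volume) := by
        rw [← mul_assoc, ← ENNReal.ofReal_mul (Real.exp_nonneg _), ← Real.exp_add]; simp
    _ ≤ ENNReal.ofReal (Real.exp (-(n * α))) * knorm α k := by gcongr

theorem eLpNorm_Bop_le {d : ℕ} {ap am : Rd d → ℝ} (hap : Integrable ap) (ham : Integrable am)
    (hap₀ : ∀ᵐ x, 0 ≤ ap x) (ham₀ : ∀ᵐ x, 0 ≤ am x) (k : CorrSeq d) (n : ℕ) :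
    eLpNorm (Bop ap am k n) ⊤ volume ≤
      n * (ENNReal.ofReal (∫ x, am x) * eLpNorm (k (n + 1)) ⊤ volume +
        ENNReal.ofReal (∫ x, ap x) * eLpNorm (k n) ⊤ volume) := by
  rw [eLpNorm_exponent_top]
  refine eLpNormEssSup_le_of_ae_enorm_bound ?_
  have hsnoc : ∀ᵐ x : Fin n → Rd d, ∀ᵐ y,
      ‖k (n + 1) (Fin.snoc x y)‖ₑ ≤ eLpNorm (k (n + 1)) ⊤ volume := by
    simpa only [Fin.insertNth_last'] using
      ae_ae_insertNth (Fin.last n) (ae_enorm_le_eLpNorm_top (k (n + 1)))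
  have hupdate : ∀ᵐ x : Fin n → Rd d, ∀ i, ∀ᵐ y,
      ‖k n (Function.update x i y)‖ₑ ≤ eLpNorm (k n) ⊤ volume := by
    rw [ae_all_iff]
    intro i
    cases n with
    | zero => exact i.elim0
    | succ n => exact ae_ae_update i (ae_enorm_le_eLpNorm_top (k (n + 1)))
  filter_upwards [hsnoc, hupdate] with x hx_loss hx_gain
  have loss : ‖∫ y, (∑ i, am (y - x i)) * k (n + 1) (Fin.snoc x y)‖ₑ ≤
      n * ENNReal.ofReal (∫ x, am x) * eLpNorm (k (n + 1)) ⊤ volume := by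
    have hint : ∫ y, ∑ i, am (y - x i) = n * ∫ x, am x := by
      rw [integral_finsetSum _ fun i _ => ham.comp_sub_right (x i)]
      simp [integral_sub_right_eq_self]
    have hnonneg : ∀ᵐ y, 0 ≤ ∑ i, am (y - x i) := by
      have hall : ∀ᵐ y, ∀ i, 0 ≤ am (y - x i) := ae_all_iff.2 fun i =>
        (measurePreserving_sub_right volume (x i)).quasiMeasurePreserving.ae ham₀
      filter_upwards [hall] with y hy using Finset.sum_nonneg fun i _ => hy i
    have h := enorm_integral_mul_le
      (integrable_finsetSum _ fun i _ => ham.comp_sub_right (x i)) hnonneg hx_loss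
    rwa [hint, ENNReal.ofReal_mul (Nat.cast_nonneg _), ENNReal.ofReal_natCast] at h
  have gain : ∀ i, ‖∫ y, ap (x i - y) * k n (Function.update x i y)‖ₑ ≤
      ENNReal.ofReal (∫ x, ap x) * eLpNorm (k n) ⊤ volume := by
    intro i
    have hnonneg : ∀ᵐ y, 0 ≤ ap (x i - y) :=
      (Measure.measurePreserving_sub_left volume (x i)).quasiMeasurePreserving.ae hap₀
    simpa only [integral_sub_left_eq_self] using
      enorm_integral_mul_le (hap.comp_sub_left (x i)) hnonneg (hx_gain i)
  calc ‖Bop ap am k n x‖ₑ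
      ≤ ‖∫ y, (∑ i, am (y - x i)) * k (n + 1) (Fin.snoc x y)‖ₑ +
          ∑ i, ‖∫ y, ap (x i - y) * k n (Function.update x i y)‖ₑ :=
        (enorm_add_le _ _).trans (by rw [enorm_neg]; gcongr; exact enorm_sum_le _ _)
    _ ≤ n * ENNReal.ofReal (∫ x, am x) * eLpNorm (k (n + 1)) ⊤ volume +
          ∑ _i : Fin n, ENNReal.ofReal (∫ x, ap x) * eLpNorm (k n) ⊤ volume :=
        add_le_add loss (Finset.sum_le_sum fun i _ => gain i)
    _ = _ := by
        simp only [Finset.sum_const, Finset.card_univ, Fintype.card_fin, nsmul_eq_mul]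
        ring

theorem knorm_le_of_eLpNorm_le {d : ℕ} {α α' : ℝ} (hαα : α < α') {A B : ℝ} (hA : 0 ≤ A)
    (hB : 0 ≤ B) {k L : CorrSeq d}
    (h : ∀ n : ℕ, eLpNorm (L n) ⊤ volume ≤
      n * (ENNReal.ofReal A * eLpNorm (k (n + 1)) ⊤ volume +
        ENNReal.ofReal B * eLpNorm (k n) ⊤ volume)) :
    knorm α L ≤
      ENNReal.ofReal (1 / (Real.exp 1 * (α' - α)) * (A * Real.exp (-α') + B)) * knorm α' k := by
  refine iSup_le fun n => ?_
  set K := knorm α' k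
  have hloss : eLpNorm (k (n + 1)) ⊤ volume ≤
      ENNReal.ofReal (Real.exp (-((n + 1) * α'))) * K := by
    simpa only [Nat.cast_succ] using eLpNorm_top_le_knorm α' k (n + 1)
  have e_loss : Real.exp (n * α) * Real.exp (-((n + 1) * α')) =
      Real.exp (-(n * (α' - α))) * Real.exp (-α') := by
    rw [← Real.exp_add, ← Real.exp_add]; ring_nf
  have e_gain : Real.exp (n * α) * Real.exp (-(n * α')) = Real.exp (-(n * (α' - α))) := by
    rw [← Real.exp_add]; ring_nf
  have hreal : Real.exp (n * α) *
        (n * (A * Real.exp (-((n + 1) * α')) + B * Real.exp (-(n * α')))) ≤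
      1 / (Real.exp 1 * (α' - α)) * (A * Real.exp (-α') + B) := by
    calc _ = n * Real.exp (-(n * (α' - α))) * (A * Real.exp (-α') + B) := by
          linear_combination (n * A) * e_loss + (n * B) * e_gain
      _ ≤ _ := by gcongr; exact Real.mul_exp_neg_mul_le (sub_pos.2 hαα) n
  calc ENNReal.ofReal (Real.exp (n * α)) * eLpNorm (L n) ⊤ volume
      ≤ ENNReal.ofReal (Real.exp (n * α)) * (n * (ENNReal.ofReal A *
          (ENNReal.ofReal (Real.exp (-((n + 1) * α'))) * K) +
          ENNReal.ofReal B * (ENNReal.ofReal (Real.exp (-(n * α'))) * K))) := by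
        grw [h n, hloss, eLpNorm_top_le_knorm α' k n]
    _ = ENNReal.ofReal (Real.exp (n * α) *
          (n * (A * Real.exp (-((n + 1) * α')) + B * Real.exp (-(n * α'))))) * K := by
        rw [ENNReal.ofReal_mul (by positivity), ENNReal.ofReal_mul (by positivity),
          ENNReal.ofReal_add (by positivity) (by positivity), ENNReal.ofReal_mul hA,
          ENNReal.ofReal_mul hB, ENNReal.ofReal_natCast]
        ring
    _ ≤ _ := by gcongr

theorem eLpNorm_A0 {d : ℕ} {m : ℝ} (hm : 0 ≤ m) (k : CorrSeq d) (n : ℕ) :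
    eLpNorm (A0 m k n) ⊤ volume = n * ENNReal.ofReal m * eLpNorm (k n) ⊤ volume := by
  have hA0 : A0 m k n = (-(m * n)) • k n := rfl
  rw [hA0, eLpNorm_const_smul, enorm_neg, Real.enorm_eq_ofReal (by positivity),
    ENNReal.ofReal_mul hm, ENNReal.ofReal_natCast, mul_comm (ENNReal.ofReal m)]

theorem statement3_general
    (d : ℕ) (m : ℝ) (hm : 0 ≤ m)
    (aplus aminus : Rd d → ℝ)
    (hap_int : Integrable aplus volume) (ham_int : Integrable aminus volume)
    (hap_pos : ∀ᵐ x ∂volume, 0 ≤ aplus x)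
    (ham_pos : ∀ᵐ x ∂volume, 0 ≤ aminus x)
    (α α' : ℝ) (hαα : α < α')
    (k : CorrSeq d) :
    knorm α (Bop aplus aminus k) ≤
        ENNReal.ofReal ((1 / (Real.exp 1 * (α' - α))) *
          ((∫ x, aminus x) * Real.exp (-α') + ∫ x, aplus x)) * knorm α' k ∧
      knorm α (A0 m k) ≤
        ENNReal.ofReal (m / (Real.exp 1 * (α' - α))) * knorm α' k := by
  refine ⟨knorm_le_of_eLpNorm_le hαα (integral_nonneg_of_ae ham_pos)
    (integral_nonneg_of_ae hap_pos) (eLpNorm_Bop_le hap_int ham_int hap_pos ham_pos k), ?_⟩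
  have hA0 := knorm_le_of_eLpNorm_le hαα le_rfl hm (k := k) (L := A0 m k) fun n => by
    simp [eLpNorm_A0 hm, mul_assoc]
  convert hA0 using 3
  ring

theorem statement3
    (d : ℕ) (hd : 1 ≤ d) (m : ℝ) (hm : 0 ≤ m)
    (aplus aminus : Rd d → ℝ)
    (hap_int : Integrable aplus volume) (ham_int : Integrable aminus volume)
    (hap_bdd : eLpNorm aplus ⊤ volume < ⊤) (ham_bdd : eLpNorm aminus ⊤ volume < ⊤)
    (hap_even : ∀ᵐ x ∂volume, aplus (-x) = aplus x)
    (ham_even : ∀ᵐ x ∂volume, aminus (-x) = aminus x)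
    (hap_pos : ∀ᵐ x ∂volume, 0 ≤ aplus x)
    (ham_pos : ∀ᵐ x ∂volume, 0 ≤ aminus x)
    (α α' : ℝ) (hαα : α < α')
    (k : CorrSeq d) (hk : IsCorrFun k) (hkK : knorm α' k < ⊤) :
    knorm α (Bop aplus aminus k) ≤
        ENNReal.ofReal ((1 / (Real.exp 1 * (α' - α))) *
          ((∫ x, aminus x) * Real.exp (-α') + ∫ x, aplus x)) * knorm α' k ∧
      knorm α (A0 m k) ≤
        ENNReal.ofReal (m / (Real.exp 1 * (α' - α))) * knorm α' k :=
  statement3_general d m hm aplus aminus hap_int ham_int hap_pos ham_pos α α' hαα k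
end
end

section
/- Let α < α' be real numbers and let k = (k^{(n)})_{n≥0} satisfy ‖k‖_{α'} < ∞. Then for each n ≥ 0, |(Ck)^{(n)}(x₁,…,xₙ)| ≤ n² e^{−(α'−α)n} (‖a⁻‖ + ‖a⁺‖ e^{α'}) ‖k‖_{α'} e^{−αn} for a.e. (x₁,…,xₙ), and consequently ‖Ck‖_α ≤ (2/(e(α'−α)))² (‖a⁻‖ + ‖a⁺‖ e^{α'}) ‖k‖_{α'}; in particular C defines a bounded linear operator from K_{α'} to K_α. -/
open MeasureTheory Filter Set Topology
open scoped ENNReal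

noncomputable section

/-!
Each entry of `(Ck)^{(n)}` is a sum over ordered pairs `i ≠ j` of `a^∓(x_i - x_j)` times
`k^{(n)}(x)` or `k^{(n-1)}` on a face of `x`, hence at most `n(n-1)` times `‖a^∓‖` times the
essential bound `e^{-nα'}‖k‖_{α'}` (resp. `e^{-(n-1)α'}‖k‖_{α'}`). These essential bounds survive
the substitutions `x ↦ x_i - x_j` and `x ↦ x ∘ Fin.succAbove i` because both maps are
quasi-measure-preserving. Multiplying by `e^{nα}` leaves `n² e^{-(α'-α)n}`, which is at most
`(2/(e(α'-α)))²` since `t e^{-t} ≤ e^{-1}`.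
-/

open Finset in
theorem abs_sum_le_card_mul {ι : Type*} (s : Finset ι) (f : ι → ℝ) {M : ℝ}
    (h : ∀ i ∈ s, |f i| ≤ M) : |∑ i ∈ s, f i| ≤ #s * M :=
  (abs_sum_le_sum_abs f s).trans <| by simpa using sum_le_card_nsmul s _ M h

theorem sq_mul_exp_neg_mul_le {lam : ℝ} (hlam : 0 < lam) {t : ℝ} (ht : 0 ≤ t) :
    t ^ 2 * Real.exp (-lam * t) ≤ (2 / (Real.exp 1 * lam)) ^ 2 := by
  have key : t * Real.exp (-(lam * t / 2)) ≤ 2 / (Real.exp 1 * lam) := by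
    have h := Real.mul_exp_neg_le_exp_neg_one (lam * t / 2)
    rw [Real.exp_neg 1] at h
    rw [le_div_iff₀ (by positivity)]
    calc t * Real.exp (-(lam * t / 2)) * (Real.exp 1 * lam)
        = 2 * (lam * t / 2 * Real.exp (-(lam * t / 2))) * Real.exp 1 := by ring
      _ ≤ 2 * (Real.exp 1)⁻¹ * Real.exp 1 := by gcongr
      _ = 2 := by field_simp
  calc t ^ 2 * Real.exp (-lam * t) = (t * Real.exp (-(lam * t / 2))) ^ 2 := by
        rw [mul_pow, ← Real.exp_nat_mul]; ring_nf
    _ ≤ _ := by gcongr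

theorem ae_abs_le_eLpNorm_top_toReal {β : Type*} [MeasurableSpace β] {μ : Measure β}
    {f : β → ℝ} (hf : eLpNorm f ⊤ μ ≠ ⊤) : ∀ᵐ y ∂μ, |f y| ≤ (eLpNorm f ⊤ μ).toReal := by
  rw [eLpNorm_exponent_top] at hf ⊢
  filter_upwards [ae_le_eLpNormEssSup (f := f) (μ := μ)] with y hy
  simpa [Real.norm_eq_abs] using ENNReal.toReal_mono hf hy

theorem quasiMeasurePreserving_comp_right_of_injective {E : Type*} [MeasureSpace E]
    [SigmaFinite (volume : Measure E)] {ι ι' : Type*} [Fintype ι] [Fintype ι'] {g : ι' → ι}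
    (hg : Function.Injective g) :
    Measure.QuasiMeasurePreserving (fun x : ι → E => x ∘ g) volume volume := by
  classical
  have toRange := Measure.quasiMeasurePreserving_fst.comp
    (volume_preserving_piEquivPiSubtypeProd (fun _ : ι => E)
      (· ∈ Set.range g)).quasiMeasurePreserving
  have reindex := (@volume_measurePreserving_piCongrLeft _ ι' (Subtype.fintype _) _ (fun _ => E)
    (Equiv.ofInjective g hg) _ _).symm.quasiMeasurePreserving
  exact reindex.comp toRange

theorem quasiMeasurePreserving_apply_sub_apply {G : Type*} [MeasureSpace G] [AddGroup G]
    [MeasurableAdd₂ G] [MeasurableNeg G] [SigmaFinite (volume : Measure G)]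
    [(volume : Measure G).IsAddLeftInvariant] {ι : Type*} [Fintype ι] {i j : ι} (hij : i ≠ j) :
    Measure.QuasiMeasurePreserving (fun x : ι → G => x i - x j) volume volume := by
  have hinj : Function.Injective ![i, j] := by
    intro a b hab
    fin_cases a <;> fin_cases b <;> simp_all [eq_comm]
  exact (quasiMeasurePreserving_sub volume volume).comp <|
    (volume_preserving_finTwoArrow G).quasiMeasurePreserving.comp <|
      quasiMeasurePreserving_comp_right_of_injective hinj

section CorrelationFunctions

variable {d : ℕ}

theorem ofReal_exp_mul_eLpNorm_le_knorm (α : ℝ) (k : CorrSeq d) (n : ℕ) :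
    ENNReal.ofReal (Real.exp (n * α)) * eLpNorm (k n) ⊤ volume ≤ knorm α k :=
  le_iSup (fun n : ℕ => ENNReal.ofReal (Real.exp (n * α)) * eLpNorm (k n) ⊤ volume) n

theorem eLpNorm_lt_top_of_knorm_ne_top {α : ℝ} {k : CorrSeq d} (hk : knorm α k ≠ ⊤) (n : ℕ) :
    eLpNorm (k n) ⊤ volume < ⊤ :=
  ENNReal.lt_top_of_mul_ne_top_right
    (ne_top_of_le_ne_top hk (ofReal_exp_mul_eLpNorm_le_knorm α k n))
    (ENNReal.ofReal_pos.2 (Real.exp_pos _)).ne'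

theorem eLpNorm_toReal_le_knorm_mul_exp {α : ℝ} {k : CorrSeq d} (hk : knorm α k ≠ ⊤)
    (n : ℕ) : (eLpNorm (k n) ⊤ volume).toReal ≤ (knorm α k).toReal * Real.exp (-(n * α)) := by
  have h := ENNReal.toReal_mono hk (ofReal_exp_mul_eLpNorm_le_knorm α k n)
  rw [ENNReal.toReal_mul, ENNReal.toReal_ofReal (Real.exp_nonneg _)] at h
  rw [Real.exp_neg, ← div_eq_mul_inv, le_div_iff₀ (Real.exp_pos _)]
  linarith

theorem knorm_le_of_ae_abs_le {α lam c : ℝ} (hlam : 0 < lam) (hc : 0 ≤ c) {k : CorrSeq d}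
    (hk : ∀ n : ℕ, ∀ᵐ x ∂(volume : Measure (Fin n → Rd d)),
      |k n x| ≤ (n : ℝ) ^ 2 * Real.exp (-lam * n) * c * Real.exp (-α * n)) :
    knorm α k ≤ ENNReal.ofReal ((2 / (Real.exp 1 * lam)) ^ 2 * c) := by
  refine iSup_le fun n => ?_
  have hn : eLpNorm (k n) ⊤ volume ≤
      ENNReal.ofReal ((n : ℝ) ^ 2 * Real.exp (-lam * n) * c * Real.exp (-α * n)) := by
    rw [eLpNorm_exponent_top]
    exact eLpNormEssSup_le_of_ae_bound (hk n)
  have hexp : Real.exp (n * α) * Real.exp (-α * n) = 1 := by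
    rw [← Real.exp_add, ← Real.exp_zero]; ring_nf
  calc ENNReal.ofReal (Real.exp (n * α)) * eLpNorm (k n) ⊤ volume
      ≤ ENNReal.ofReal (Real.exp (n * α)) *
          ENNReal.ofReal ((n : ℝ) ^ 2 * Real.exp (-lam * n) * c * Real.exp (-α * n)) := by
        gcongr
    _ = ENNReal.ofReal ((n : ℝ) ^ 2 * Real.exp (-lam * n) * c) := by
        rw [← ENNReal.ofReal_mul (Real.exp_nonneg _)]
        congr 1
        linear_combination ((n : ℝ) ^ 2 * Real.exp (-lam * n) * c) * hexp
    _ ≤ ENNReal.ofReal ((2 / (Real.exp 1 * lam)) ^ 2 * c) := by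
        gcongr
        exact sq_mul_exp_neg_mul_le hlam n.cast_nonneg

open Finset in
theorem abs_Cop_succ_le {ap am : Rd d → ℝ} {k : CorrSeq d} {n : ℕ} {x : Fin (n + 1) → Rd d}
    {Mm Mp E₁ E₀ : ℝ} (hm : ∀ i j, i ≠ j → |am (x i - x j)| ≤ Mm)
    (hp : ∀ i j, i ≠ j → |ap (x i - x j)| ≤ Mp) (h₁ : |k (n + 1) x| ≤ E₁)
    (h₀ : ∀ i : Fin (n + 1), |k n (x ∘ i.succAbove)| ≤ E₀) :
    |Cop ap am k (n + 1) x| ≤ (n + 1) * n * (Mm * E₁ + Mp * E₀) := by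
  have row : ∀ (a : Rd d → ℝ) (M : ℝ), (∀ i j, i ≠ j → |a (x i - x j)| ≤ M) →
      ∀ i, |∑ j ∈ univ.erase i, a (x i - x j)| ≤ n * M := fun a M ha i => by
    have h := abs_sum_le_card_mul (univ.erase i) _ fun j hj => ha i j (ne_of_mem_erase hj).symm
    rwa [card_erase_of_mem (mem_univ i), card_univ, Fintype.card_fin, Nat.add_sub_cancel] at h
  have hS : |∑ i, ∑ j ∈ univ.erase i, am (x i - x j)| ≤ (n + 1) * (n * Mm) := by
    simpa using abs_sum_le_card_mul univ _ fun i _ => row am Mm hm i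
  have minus : |(-(∑ i, ∑ j ∈ univ.erase i, am (x i - x j))) * k (n + 1) x|
      ≤ (n + 1) * (n * Mm) * E₁ := by
    rw [abs_mul, abs_neg]
    exact mul_le_mul hS h₁ (abs_nonneg _) ((abs_nonneg _).trans hS)
  have plus : |∑ i : Fin (n + 1), (∑ j ∈ univ.erase i, ap (x i - x j)) * k n (x ∘ i.succAbove)|
      ≤ (n + 1) * (n * Mp * E₀) := by
    refine (abs_sum_le_card_mul univ _ (M := n * Mp * E₀) fun i _ => ?_).trans_eq (by simp)
    rw [abs_mul]
    exact mul_le_mul (row ap Mp hp i) (h₀ i) (abs_nonneg _)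
      ((abs_nonneg _).trans (row ap Mp hp i))
  calc |Cop ap am k (n + 1) x| ≤ _ + _ := abs_add_le _ _
    _ ≤ (n + 1) * (n * Mm) * E₁ + (n + 1) * (n * Mp * E₀) := add_le_add minus plus
    _ = (n + 1) * n * (Mm * E₁ + Mp * E₀) := by ring

theorem ae_abs_Cop_succ_le {ap am : Rd d → ℝ} (hap : eLpNorm ap ⊤ volume ≠ ⊤)
    (ham : eLpNorm am ⊤ volume ≠ ⊤) {k : CorrSeq d} {n : ℕ}
    (hk₁ : eLpNorm (k (n + 1)) ⊤ volume ≠ ⊤) (hk₀ : eLpNorm (k n) ⊤ volume ≠ ⊤) :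
    ∀ᵐ x ∂volume, |Cop ap am k (n + 1) x| ≤ (n + 1) * n *
      ((eLpNorm am ⊤ volume).toReal * (eLpNorm (k (n + 1)) ⊤ volume).toReal +
        (eLpNorm ap ⊤ volume).toReal * (eLpNorm (k n) ⊤ volume).toReal) := by
  have pairs : ∀ a : Rd d → ℝ, eLpNorm a ⊤ volume ≠ ⊤ →
      ∀ᵐ x : Fin (n + 1) → Rd d ∂volume,
        ∀ i j, i ≠ j → |a (x i - x j)| ≤ (eLpNorm a ⊤ volume).toReal := by
    refine fun a ha => ae_all_iff.2 fun i => ae_all_iff.2 fun j => ?_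
    rcases eq_or_ne i j with rfl | hij
    · exact ae_of_all _ fun _ h => absurd rfl h
    · exact ((quasiMeasurePreserving_apply_sub_apply hij).ae
        (ae_abs_le_eLpNorm_top_toReal ha)).mono fun _ hx _ => hx
  have faces : ∀ᵐ x : Fin (n + 1) → Rd d ∂volume,
      ∀ i : Fin (n + 1), |k n (x ∘ i.succAbove)| ≤ (eLpNorm (k n) ⊤ volume).toReal :=
    ae_all_iff.2 fun i => (quasiMeasurePreserving_comp_right_of_injective
      Fin.succAbove_right_injective).ae (ae_abs_le_eLpNorm_top_toReal hk₀)
  filter_upwards [pairs am ham, pairs ap hap, ae_abs_le_eLpNorm_top_toReal hk₁, faces]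
    with x hm hp h₁ h₀
  exact abs_Cop_succ_le hm hp h₁ h₀

theorem ae_abs_Cop_le {ap am : Rd d → ℝ} (hap : eLpNorm ap ⊤ volume ≠ ⊤)
    (ham : eLpNorm am ⊤ volume ≠ ⊤) (α α' : ℝ) {k : CorrSeq d} (hk : knorm α' k ≠ ⊤)
    (n : ℕ) : ∀ᵐ x ∂(volume : Measure (Fin n → Rd d)),
      |Cop ap am k n x| ≤ (n : ℝ) ^ 2 * Real.exp (-(α' - α) * n) *
        ((eLpNorm am ⊤ volume).toReal + (eLpNorm ap ⊤ volume).toReal * Real.exp α') *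
        (knorm α' k).toReal * Real.exp (-α * n) := by
  cases n with
  | zero => exact ae_of_all _ fun x => by simp [Cop]
  | succ n =>
    filter_upwards [ae_abs_Cop_succ_le hap ham (eLpNorm_lt_top_of_knorm_ne_top hk (n + 1)).ne
      (eLpNorm_lt_top_of_knorm_ne_top hk n).ne] with x hx
    have h₁ := eLpNorm_toReal_le_knorm_mul_exp hk (n + 1)
    have h₀ := eLpNorm_toReal_le_knorm_mul_exp hk n
    have shift : Real.exp (-(n * α')) = Real.exp (-((n + 1 : ℕ) * α')) * Real.exp α' := by
      rw [← Real.exp_add]; push_cast; ring_nf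
    have split : Real.exp (-((n + 1 : ℕ) * α')) =
        Real.exp (-(α' - α) * (n + 1 : ℕ)) * Real.exp (-α * (n + 1 : ℕ)) := by
      rw [← Real.exp_add]; ring_nf
    set Mm := (eLpNorm am ⊤ volume).toReal
    set Mp := (eLpNorm ap ⊤ volume).toReal
    set K := (knorm α' k).toReal
    calc |Cop ap am k (n + 1) x|
        ≤ (n + 1) * n * (Mm * (K * Real.exp (-((n + 1 : ℕ) * α'))) +
            Mp * (K * Real.exp (-(n * α')))) := by
          refine hx.trans ?_
          gcongr
      _ = (n + 1) * n * Real.exp (-((n + 1 : ℕ) * α')) * (Mm + Mp * Real.exp α') * K := by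
          rw [shift]; ring
      _ ≤ ((n + 1 : ℕ) : ℝ) ^ 2 * Real.exp (-((n + 1 : ℕ) * α')) *
            (Mm + Mp * Real.exp α') * K := by
          gcongr
          push_cast
          nlinarith
      _ = _ := by rw [split]; ring

end CorrelationFunctions

theorem statement4_general
    (d : ℕ)
    (aplus aminus : Rd d → ℝ)
    (hap_bdd : eLpNorm aplus ⊤ volume < ⊤) (ham_bdd : eLpNorm aminus ⊤ volume < ⊤)
    (α α' : ℝ) (hαα : α < α')
    (k : CorrSeq d) (hkK : knorm α' k < ⊤) :
    (∀ n : ℕ, ∀ᵐ x ∂(volume : Measure (Fin n → Rd d)),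
        |Cop aplus aminus k n x| ≤
          (n : ℝ) ^ 2 * Real.exp (-(α' - α) * n) *
            ((eLpNorm aminus ⊤ volume).toReal +
              (eLpNorm aplus ⊤ volume).toReal * Real.exp α') *
            (knorm α' k).toReal * Real.exp (-α * n)) ∧
      knorm α (Cop aplus aminus k) ≤
        ENNReal.ofReal ((2 / (Real.exp 1 * (α' - α))) ^ 2 *
            ((eLpNorm aminus ⊤ volume).toReal +
              (eLpNorm aplus ⊤ volume).toReal * Real.exp α')) * knorm α' k := by
  have pointwise := ae_abs_Cop_le hap_bdd.ne ham_bdd.ne α α' hkK.ne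
  refine ⟨pointwise, ?_⟩
  calc knorm α (Cop aplus aminus k)
      ≤ ENNReal.ofReal ((2 / (Real.exp 1 * (α' - α))) ^ 2 *
          (((eLpNorm aminus ⊤ volume).toReal + (eLpNorm aplus ⊤ volume).toReal * Real.exp α') *
            (knorm α' k).toReal)) :=
        knorm_le_of_ae_abs_le (sub_pos.2 hαα) (by positivity) fun n =>
          (pointwise n).mono fun _ hx => hx.trans_eq (by ring)
    _ = _ := by rw [← mul_assoc, ENNReal.ofReal_mul (by positivity), ENNReal.ofReal_toReal hkK.ne]

theorem statement4
    (d : ℕ) (hd : 1 ≤ d) (m : ℝ) (hm : 0 ≤ m)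
    (aplus aminus : Rd d → ℝ)
    (hap_int : Integrable aplus volume) (ham_int : Integrable aminus volume)
    (hap_bdd : eLpNorm aplus ⊤ volume < ⊤) (ham_bdd : eLpNorm aminus ⊤ volume < ⊤)
    (hap_even : ∀ᵐ x ∂volume, aplus (-x) = aplus x)
    (ham_even : ∀ᵐ x ∂volume, aminus (-x) = aminus x)
    (hap_pos : ∀ᵐ x ∂volume, 0 ≤ aplus x)
    (ham_pos : ∀ᵐ x ∂volume, 0 ≤ aminus x)
    (α α' : ℝ) (hαα : α < α')
    (k : CorrSeq d) (hk : IsCorrFun k) (hkK : knorm α' k < ⊤) :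
    (∀ n : ℕ, ∀ᵐ x ∂(volume : Measure (Fin n → Rd d)),
        |Cop aplus aminus k n x| ≤
          (n : ℝ) ^ 2 * Real.exp (-(α' - α) * n) *
            ((eLpNorm aminus ⊤ volume).toReal +
              (eLpNorm aplus ⊤ volume).toReal * Real.exp α') *
            (knorm α' k).toReal * Real.exp (-α * n)) ∧
      knorm α (Cop aplus aminus k) ≤
        ENNReal.ofReal ((2 / (Real.exp 1 * (α' - α))) ^ 2 *
            ((eLpNorm aminus ⊤ volume).toReal +
              (eLpNorm aplus ⊤ volume).toReal * Real.exp α')) * knorm α' k :=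
  statement4_general d aplus aminus hap_bdd ham_bdd α α' hαα k hkK
end
end

section
/- Let α ∈ ℝ, ε ∈ (0,1], and let G = (G^{(n)})_{n≥0} be a pre-dual element such that Σ_{n≥0} (e^{−nα}/n!) ‖E⁺ G^{(n)}‖_{L¹} < ∞, where (E⁺ G^{(n)})(x₁,…,xₙ) = (Σ_{1≤i≠j≤n} a⁺(x_i−x_j)) G^{(n)}(x₁,…,xₙ). Then ‖Â⁽²⁾_ε G‖_α ≤ e^{α} ε Σ_{n≥0} (e^{−nα}/n!) ‖E⁺ G^{(n)}‖_{L¹}. -/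
/-!
Bounding the inner integral by the integral of its absolute value gives
`‖(Â⁽²⁾_ε G)^{(n)}‖ ≤ ε Σ_{i ≤ n} ∫ a⁺(z_{n+1} − z_i) |G^{(n+1)}(z)| dz`. Since `G^{(n+1)}` is
symmetric, all pair integrals `∫ a⁺(z_p − z_q) |G^{(n+1)}(z)| dz` with `p ≠ q` coincide, so these
`n` of them make up exactly `1/(n+1)` of the `(n+1)n` pairs in `‖E⁺ G^{(n+1)}‖`. The factor
`1/(n+1)` turns the weight `e^{−nα}/n!` into `e^{α} e^{−(n+1)α}/(n+1)!`, and the resulting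
series is the tail of the one on the right.
-/

open MeasureTheory Filter Set Topology
open scoped ENNReal

noncomputable section

/-- pre-dual elements: sequences `G = (G^{(n)})_{n ≥ 0}` -/
abbrev PreDual (d : ℕ) := (n : ℕ) → (Fin n → Rd d) → ℝ

/-- the pre-dual norm `‖G‖_α = Σ_n (e^{−nα}/n!) ‖G^{(n)}‖_{L¹}`, with values in `ℝ≥0∞`. -/
def gnorm {d : ℕ} (α : ℝ) (G : PreDual d) : ℝ≥0∞ :=
  ∑' n : ℕ, ENNReal.ofReal (Real.exp (-(n : ℝ) * α) / n.factorial) *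
    eLpNorm (G n) 1 volume

/-- `E^±(x₁,…,xₙ) = Σ_{i ≠ j} a^±(x_i − x_j)` -/
def Efun {d : ℕ} (a : Rd d → ℝ) (n : ℕ) (x : Fin n → Rd d) : ℝ :=
  ∑ i, ∑ j ∈ Finset.univ.erase i, a (x i - x j)

/-- `(Â⁽¹⁾_ε G)^{(n)} = −(mn + ε E⁻) G^{(n)}` -/
def A1hat {d : ℕ} (m ε : ℝ) (am : Rd d → ℝ) (G : PreDual d) : PreDual d :=
  fun n x => -(m * n + ε * Efun am n x) * G n x

/-- `(Â⁽²⁾_ε G)^{(n)}(x₁,…,xₙ) = ε ∫ (Σ_i a⁺(y−x_i)) G^{(n+1)}(x₁,…,xₙ,y) dy` -/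
def A2hat {d : ℕ} (ε : ℝ) (ap : Rd d → ℝ) (G : PreDual d) : PreDual d :=
  fun n x => ε * ∫ y : Rd d, (∑ i, ap (y - x i)) * G (n + 1) (Fin.snoc x y)

theorem Equiv.Perm.exists_apply_eq_and_apply_eq {α : Type*} [DecidableEq α] {p q p' q' : α}
    (hpq : p ≠ q) (hpq' : p' ≠ q') : ∃ σ : Equiv.Perm α, σ p = p' ∧ σ q = q' := by
  set τ := Equiv.swap p p'
  have hτq : τ q ≠ p' := fun h => hpq (τ.injective (by rw [h, Equiv.swap_apply_left]))
  refine ⟨τ.trans (Equiv.swap (τ q) q'), ?_, Equiv.swap_apply_left _ _⟩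
  simp only [Equiv.trans_apply, τ, Equiv.swap_apply_left]
  exact Equiv.swap_apply_of_ne_of_ne hτq.symm hpq'

theorem Fin.sum_sum_erase_eq_of_forall_ne {M : Type*} [AddCommMonoid M] {n : ℕ}
    {f : Fin (n + 1) → Fin (n + 1) → M}
    (hf : ∀ p q p' q', p ≠ q → p' ≠ q' → f p q = f p' q') :
    ∑ p, ∑ q ∈ Finset.univ.erase p, f p q = (n + 1) • ∑ i : Fin n, f (Fin.last n) i.castSucc := by
  have hrow : ∀ p, ∑ q ∈ Finset.univ.erase p, f p q = ∑ i : Fin n, f (Fin.last n) i.castSucc := by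
    intro p
    rw [← Finset.compl_singleton, ← Fin.image_succAbove_univ,
      Finset.sum_image fun _ _ _ _ h => Fin.succAbove_right_injective h]
    exact Finset.sum_congr rfl fun i _ =>
      hf _ _ _ _ (Fin.succAbove_ne p i).symm (Fin.castSucc_lt_last i).ne'
  simp [hrow]

def pairIntegral {X : Type*} [MeasureSpace X] [Sub X] {N : ℕ} (A : X → ℝ)
    (H : (Fin N → X) → ℝ) (p q : Fin N) : ℝ≥0∞ :=
  ∫⁻ z, ‖A (z p - z q)‖ₑ * ‖H z‖ₑ

section

variable {X : Type*} [MeasureSpace X] [SigmaFinite (volume : Measure X)]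

theorem lintegral_comp_perm {N : ℕ} (σ : Equiv.Perm (Fin N)) (f : (Fin N → X) → ℝ≥0∞) :
    ∫⁻ z, f (z ∘ σ) = ∫⁻ z, f z := by
  have e : ∀ z : Fin N → X, z ∘ σ = MeasurableEquiv.piCongrLeft (fun _ => X) σ.symm z := by
    intro z
    ext j
    simpa using (MeasurableEquiv.piCongrLeft_apply_apply (β := fun _ => X) σ.symm z (σ j)).symm
  simp_rw [e]
  exact (volume_measurePreserving_piCongrLeft _ _).lintegral_comp_emb
    (MeasurableEquiv.measurableEmbedding _) f

theorem measurePreserving_snoc {n : ℕ} :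
    MeasurePreserving (fun p : (Fin n → X) × X => (Fin.snoc p.1 p.2 : Fin (n + 1) → X)) := by
  have h := (volume_preserving_piFinSuccAbove (fun _ : Fin (n + 1) => X) (Fin.last n)).symm
  rw [Measure.volume_eq_prod] at h ⊢
  have e : (fun p : (Fin n → X) × X => (Fin.snoc p.1 p.2 : Fin (n + 1) → X)) =
      (MeasurableEquiv.piFinSuccAbove (fun _ => X) (Fin.last n)).symm ∘ Prod.swap := by
    ext p
    simp [Fin.insertNthEquiv, Fin.insertNth_last']
  exact e ▸ h.comp Measure.measurePreserving_swap

theorem lintegral_lintegral_snoc {n : ℕ} {f : (Fin (n + 1) → X) → ℝ≥0∞} (hf : AEMeasurable f) :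
    ∫⁻ x : Fin n → X, ∫⁻ y, f (Fin.snoc x y) = ∫⁻ z, f z := by
  have hsnoc := measurePreserving_snoc (X := X) (n := n)
  rw [← hsnoc.map_eq, lintegral_map' (hsnoc.map_eq ▸ hf) hsnoc.measurable.aemeasurable]
  rw [Measure.volume_eq_prod] at hsnoc ⊢
  exact (lintegral_prod _ (hf.comp_quasiMeasurePreserving hsnoc.quasiMeasurePreserving)).symm

variable [AddGroup X]

theorem pairIntegral_perm {N : ℕ} (A : X → ℝ) {H : (Fin N → X) → ℝ}
    (hH : ∀ (σ : Equiv.Perm (Fin N)) z, H (z ∘ σ) = H z) (σ : Equiv.Perm (Fin N)) (p q : Fin N) :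
    pairIntegral A H (σ p) (σ q) = pairIntegral A H p q := by
  unfold pairIntegral
  rw [← lintegral_comp_perm σ fun z => ‖A (z p - z q)‖ₑ * ‖H z‖ₑ]
  simp only [Function.comp_apply, hH]

theorem pairIntegral_eq_of_ne {N : ℕ} (A : X → ℝ) {H : (Fin N → X) → ℝ}
    (hH : ∀ (σ : Equiv.Perm (Fin N)) z, H (z ∘ σ) = H z) {p q p' q' : Fin N}
    (hpq : p ≠ q) (hpq' : p' ≠ q') : pairIntegral A H p q = pairIntegral A H p' q' := by
  obtain ⟨σ, rfl, rfl⟩ := Equiv.Perm.exists_apply_eq_and_apply_eq hpq hpq'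
  exact (pairIntegral_perm A hH σ p q).symm

variable [MeasurableAdd X] [MeasurableSub₂ X] [(volume : Measure X).IsAddRightInvariant]

theorem quasiMeasurePreserving_apply_sub_apply_s5 {N : ℕ} {p q : Fin N} (hpq : p ≠ q) :
    Measure.QuasiMeasurePreserving (fun z : Fin N → X => z p - z q) := by
  cases N with
  | zero => exact p.elim0
  | succ N =>
    obtain ⟨k, rfl⟩ := Fin.exists_succAbove_eq hpq.symm
    have hsub : Measure.QuasiMeasurePreserving (fun w : X × (Fin N → X) => w.1 - w.2 k) := by
      rw [Measure.volume_eq_prod]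
      exact QuasiMeasurePreserving.prod_of_left (by fun_prop)
        (ae_of_all _ fun w => (measurePreserving_sub_right volume (w k)).quasiMeasurePreserving)
    exact hsub.comp (volume_preserving_piFinSuccAbove (fun _ => X) p).quasiMeasurePreserving

theorem aemeasurable_pairIntegrand {N : ℕ} {A : X → ℝ} {H : (Fin N → X) → ℝ}
    (hA : AEStronglyMeasurable A) (hH : AEStronglyMeasurable H) {p q : Fin N} (hpq : p ≠ q) :
    AEMeasurable fun z => ‖A (z p - z q)‖ₑ * ‖H z‖ₑ :=
  (hA.enorm.comp_quasiMeasurePreserving (quasiMeasurePreserving_apply_sub_apply_s5 hpq)).mul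
    hH.enorm

end

theorem Real.enorm_sum_of_nonneg {ι : Type*} {s : Finset ι} {f : ι → ℝ} (hf : ∀ i ∈ s, 0 ≤ f i) :
    ‖∑ i ∈ s, f i‖ₑ = ∑ i ∈ s, ‖f i‖ₑ := by
  rw [Real.enorm_of_nonneg (Finset.sum_nonneg hf), ENNReal.ofReal_sum_of_nonneg hf]
  exact Finset.sum_congr rfl fun i hi => (Real.enorm_of_nonneg (hf i hi)).symm

section

variable {d : ℕ} {A : Rd d → ℝ}

theorem eLpNorm_Efun_mul_eq (hA : AEStronglyMeasurable A) (hA0 : ∀ᵐ x, 0 ≤ A x) {N : ℕ}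
    {H : (Fin N → Rd d) → ℝ} (hH : AEStronglyMeasurable H) :
    eLpNorm (fun z => Efun A N z * H z) 1 volume =
      ∑ p, ∑ q ∈ Finset.univ.erase p, pairIntegral A H p q := by
  have hpos : ∀ᵐ z : Fin N → Rd d, ∀ p, ∀ q ∈ Finset.univ.erase p, 0 ≤ A (z p - z q) :=
    ae_all_iff.2 fun p => (eventually_all_finset _).2 fun q hq =>
      (quasiMeasurePreserving_apply_sub_apply_s5 (Finset.ne_of_mem_erase hq).symm).ae hA0
  have hmeas : ∀ p, ∀ q ∈ Finset.univ.erase p,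
      AEMeasurable fun z : Fin N → Rd d => ‖A (z p - z q)‖ₑ * ‖H z‖ₑ := fun p q hq =>
    aemeasurable_pairIntegrand hA hH (Finset.ne_of_mem_erase hq).symm
  rw [eLpNorm_one_eq_lintegral_enorm]
  calc ∫⁻ z, ‖Efun A N z * H z‖ₑ
      = ∫⁻ z, ∑ p, ∑ q ∈ Finset.univ.erase p, ‖A (z p - z q)‖ₑ * ‖H z‖ₑ := by
        refine lintegral_congr_ae (hpos.mono fun z hz => ?_)
        dsimp only
        rw [enorm_mul, Efun, Real.enorm_sum_of_nonneg fun p _ => Finset.sum_nonneg (hz p),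
          Finset.sum_mul]
        exact Finset.sum_congr rfl fun p _ => by
          rw [Real.enorm_sum_of_nonneg (hz p), Finset.sum_mul]
    _ = ∑ p, ∑ q ∈ Finset.univ.erase p, pairIntegral A H p q := by
        rw [lintegral_finsetSum' _ fun p _ => Finset.aemeasurable_fun_sum _ (hmeas p)]
        exact Finset.sum_congr rfl fun p _ => lintegral_finsetSum' _ (hmeas p)

theorem eLpNorm_A2hat_le (ε : ℝ) (hA : AEStronglyMeasurable A) {G : PreDual d} {n : ℕ}
    (hG : AEStronglyMeasurable (G (n + 1))) :
    eLpNorm (A2hat ε A G n) 1 volume ≤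
      ‖ε‖ₑ * ∑ i : Fin n, pairIntegral A (G (n + 1)) (Fin.last n) i.castSucc := by
  set Φ : (Fin (n + 1) → Rd d) → ℝ≥0∞ := fun z =>
    ∑ i : Fin n, ‖A (z (Fin.last n) - z i.castSucc)‖ₑ * ‖G (n + 1) z‖ₑ
  have hmeas : ∀ i : Fin n, AEMeasurable fun z : Fin (n + 1) → Rd d =>
      ‖A (z (Fin.last n) - z i.castSucc)‖ₑ * ‖G (n + 1) z‖ₑ := fun i =>
    aemeasurable_pairIntegrand hA hG (Fin.castSucc_lt_last i).ne'
  have hpointwise : ∀ x, ‖A2hat ε A G n x‖ₑ ≤ ‖ε‖ₑ * ∫⁻ y, Φ (Fin.snoc x y) := fun x => by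
    rw [A2hat, enorm_mul]
    gcongr
    refine (enorm_integral_le_lintegral_enorm _).trans (lintegral_mono fun y => ?_)
    simp only [Φ, enorm_mul, Fin.snoc_last, Fin.snoc_castSucc, ← Finset.sum_mul]
    gcongr
    exact enorm_sum_le _ _
  rw [eLpNorm_one_eq_lintegral_enorm]
  calc ∫⁻ x, ‖A2hat ε A G n x‖ₑ ≤ ∫⁻ x, ‖ε‖ₑ * ∫⁻ y, Φ (Fin.snoc x y) := lintegral_mono hpointwise
    _ = ‖ε‖ₑ * ∫⁻ z, Φ z := by
        rw [lintegral_const_mul' _ _ enorm_ne_top,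
          lintegral_lintegral_snoc (Finset.aemeasurable_fun_sum _ fun i _ => hmeas i)]
    _ = _ := by rw [lintegral_finsetSum' _ fun i _ => hmeas i]; rfl

theorem natCast_succ_mul_eLpNorm_A2hat_le (ε : ℝ) (hA : AEStronglyMeasurable A)
    (hA0 : ∀ᵐ x, 0 ≤ A x) {G : PreDual d} {n : ℕ} (hG : AEStronglyMeasurable (G (n + 1)))
    (hG_symm : ∀ (σ : Equiv.Perm (Fin (n + 1))) z, G (n + 1) (z ∘ σ) = G (n + 1) z) :
    (n + 1 : ℝ≥0∞) * eLpNorm (A2hat ε A G n) 1 volume ≤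
      ‖ε‖ₑ * eLpNorm (fun z => Efun A (n + 1) z * G (n + 1) z) 1 volume := by
  rw [eLpNorm_Efun_mul_eq hA hA0 hG,
    Fin.sum_sum_erase_eq_of_forall_ne fun _ _ _ _ => pairIntegral_eq_of_ne A hG_symm,
    nsmul_eq_mul, Nat.cast_succ, mul_left_comm]
  gcongr
  exact eLpNorm_A2hat_le ε hA hG

end

theorem ofReal_exp_div_factorial_eq_mul_succ (α : ℝ) (n : ℕ) :
    ENNReal.ofReal (Real.exp (-(n : ℝ) * α) / n.factorial) =
      ENNReal.ofReal (Real.exp α) * (n + 1) *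
        ENNReal.ofReal (Real.exp (-((n + 1 : ℕ) : ℝ) * α) / (n + 1).factorial) := by
  have h : Real.exp (-(n : ℝ) * α) / n.factorial =
      Real.exp α * (n + 1) * (Real.exp (-((n + 1 : ℕ) : ℝ) * α) / (n + 1).factorial) := by
    rw [Nat.factorial_succ, Nat.cast_mul, Nat.cast_succ, show -((n : ℝ) + 1) * α = -(n : ℝ) * α - α
      by ring, Real.exp_sub]
    field_simp
  rw [h, ENNReal.ofReal_mul (by positivity), ENNReal.ofReal_mul (by positivity)]
  norm_cast

theorem ofReal_weight_mul_eLpNorm_A2hat_le {d : ℕ} {A : Rd d → ℝ} (hA : AEStronglyMeasurable A)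
    (hA0 : ∀ᵐ x, 0 ≤ A x) (α : ℝ) {ε : ℝ} (hε : 0 ≤ ε) {G : PreDual d} {n : ℕ}
    (hG : AEStronglyMeasurable (G (n + 1)))
    (hG_symm : ∀ (σ : Equiv.Perm (Fin (n + 1))) z, G (n + 1) (z ∘ σ) = G (n + 1) z) :
    ENNReal.ofReal (Real.exp (-(n : ℝ) * α) / n.factorial) * eLpNorm (A2hat ε A G n) 1 volume ≤
      ENNReal.ofReal (Real.exp α * ε) *
        (ENNReal.ofReal (Real.exp (-((n + 1 : ℕ) : ℝ) * α) / (n + 1).factorial) *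
          eLpNorm (fun z => Efun A (n + 1) z * G (n + 1) z) 1 volume) := by
  set w := ENNReal.ofReal (Real.exp (-((n + 1 : ℕ) : ℝ) * α) / (n + 1).factorial)
  rw [ofReal_exp_div_factorial_eq_mul_succ α n, ENNReal.ofReal_mul (Real.exp_pos α).le,
    ← Real.enorm_of_nonneg hε]
  calc _ = ENNReal.ofReal (Real.exp α) * w * ((n + 1) * eLpNorm (A2hat ε A G n) 1 volume) := by
        ring
    _ ≤ ENNReal.ofReal (Real.exp α) * w *
          (‖ε‖ₑ * eLpNorm (fun z => Efun A (n + 1) z * G (n + 1) z) 1 volume) := by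
        gcongr _ * ?_
        exact natCast_succ_mul_eLpNorm_A2hat_le ε hA hA0 hG hG_symm
    _ = _ := by ring

theorem statement5_general
    (d : ℕ)
    (aplus : Rd d → ℝ)
    (hap_int : Integrable aplus volume)
    (hap_pos : ∀ᵐ x ∂volume, 0 ≤ aplus x)
    (α : ℝ) (ε : ℝ) (hε : ε ∈ Set.Ioc (0 : ℝ) 1)
    (G : PreDual d)
    (hG_int : ∀ n, Integrable (G n) volume)
    (hG_symm : ∀ n (σ : Equiv.Perm (Fin n)) (x : Fin n → Rd d), G n (x ∘ σ) = G n x) :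
    gnorm α (A2hat ε aplus G) ≤
      ENNReal.ofReal (Real.exp α * ε) *
        ∑' n : ℕ, ENNReal.ofReal (Real.exp (-(n : ℝ) * α) / n.factorial) *
          eLpNorm (fun x => Efun aplus n x * G n x) 1 volume := by
  set w : ℕ → ℝ≥0∞ := fun n => ENNReal.ofReal (Real.exp (-(n : ℝ) * α) / n.factorial)
  set T : ℕ → ℝ≥0∞ := fun n => eLpNorm (fun x => Efun aplus n x * G n x) 1 volume
  calc gnorm α (A2hat ε aplus G)
      ≤ ∑' n, ENNReal.ofReal (Real.exp α * ε) * (w (n + 1) * T (n + 1)) :=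
        ENNReal.tsum_le_tsum fun n => ofReal_weight_mul_eLpNorm_A2hat_le hap_int.1 hap_pos α
          hε.1.le (hG_int (n + 1)).1 (hG_symm (n + 1))
    _ = ENNReal.ofReal (Real.exp α * ε) * ∑' n, w (n + 1) * T (n + 1) := ENNReal.tsum_mul_left
    _ ≤ ENNReal.ofReal (Real.exp α * ε) * ∑' n, w n * T n := by
        gcongr _ * ?_
        exact ENNReal.tsum_comp_le_tsum_of_injective (add_left_injective 1) _

theorem statement5
    (d : ℕ) (hd : 1 ≤ d) (m : ℝ) (hm : 0 ≤ m)
    (aplus aminus : Rd d → ℝ)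
    (hap_int : Integrable aplus volume) (ham_int : Integrable aminus volume)
    (hap_bdd : eLpNorm aplus ⊤ volume < ⊤) (ham_bdd : eLpNorm aminus ⊤ volume < ⊤)
    (hap_even : ∀ᵐ x ∂volume, aplus (-x) = aplus x)
    (ham_even : ∀ᵐ x ∂volume, aminus (-x) = aminus x)
    (hap_pos : ∀ᵐ x ∂volume, 0 ≤ aplus x)
    (ham_pos : ∀ᵐ x ∂volume, 0 ≤ aminus x)
    (α : ℝ) (ε : ℝ) (hε : ε ∈ Set.Ioc (0 : ℝ) 1)
    (G : PreDual d)
    (hG_int : ∀ n, Integrable (G n) volume)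
    (hG_symm : ∀ n (σ : Equiv.Perm (Fin n)) (x : Fin n → Rd d), G n (x ∘ σ) = G n x)
    (hGE : ∑' n : ℕ, ENNReal.ofReal (Real.exp (-(n : ℝ) * α) / n.factorial) *
        eLpNorm (fun x => Efun aplus n x * G n x) 1 volume < ⊤) :
    gnorm α (A2hat ε aplus G) ≤
      ENNReal.ofReal (Real.exp α * ε) *
        ∑' n : ℕ, ENNReal.ofReal (Real.exp (-(n : ℝ) * α) / n.factorial) *
          eLpNorm (fun x => Efun aplus n x * G n x) 1 volume :=
  statement5_general d aplus hap_int hap_pos α ε hε G hG_int hG_symm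
end
end

section
/- Let (ρ_s)_{s∈[0,t]} be a classical solution of the kinetic equation with ρ₀ ∈ L∞(ℝ^d), ρ₀ ≥ 0 a.e., and ρ_s ≥ 0 a.e. for all s ∈ [0,t]. Then for every s ∈ [0,t], ‖ρ_s‖_{L∞(ℝ^d)} ≤ ‖ρ₀‖_{L∞(ℝ^d)} exp(−s(m − ⟨a⁺⟩)). -/
open MeasureTheory Filter Set Topology
open scoped ENNReal

noncomputable section

/-- the convolution `(a ∗ ρ)(x) = ∫ a(x−y) ρ(y) dy` -/
def conv {d : ℕ} (a ρ : Rd d → ℝ) (x : Rd d) : ℝ := ∫ y : Rd d, a (x - y) * ρ y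

/-- the right-hand side of the kinetic equation:
`−m ρ − (a⁻ ∗ ρ) ρ + (a⁺ ∗ ρ)`. -/
def KRHS {d : ℕ} (m : ℝ) (ap am : Rd d → ℝ) (ρ : Rd d → ℝ) : Rd d → ℝ :=
  fun x => -m * ρ x - conv am ρ x * ρ x + conv ap ρ x

/-- classical solution of the kinetic equation on the time set `I`, continuously
differentiable with respect to the `L∞`-norm. -/
structure KinSol {d : ℕ} (m : ℝ) (ap am : Rd d → ℝ) (I : Set ℝ)
    (ρ0 : Rd d → ℝ) (ρ : ℝ → Rd d → ℝ) : Prop where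
  init : ρ 0 =ᵐ[volume] ρ0
  meas : ∀ t ∈ I, AEStronglyMeasurable (ρ t) volume
  bdd : ∀ t ∈ I, eLpNorm (ρ t) ⊤ volume < ⊤
  hasDeriv : ∀ t ∈ I,
    Tendsto (fun h : ℝ =>
        eLpNorm (ρ (t + h) - ρ t - h • KRHS m ap am (ρ t)) ⊤ volume /
          ENNReal.ofReal |h|)
      (𝓝[{h : ℝ | h ≠ 0 ∧ t + h ∈ I}] 0) (𝓝 0)
  contDeriv : ∀ t ∈ I,
    Tendsto (fun s : ℝ =>
        eLpNorm (KRHS m ap am (ρ s) - KRHS m ap am (ρ t)) ⊤ volume)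
      (𝓝[I] t) (𝓝 0)

/-! The proof is a Grönwall argument for `N s = ‖ρ s‖_∞`. If `0 ≤ ρ ≤ N` a.e., then
`0 ≤ a^± ∗ ρ ≤ ⟨a^±⟩ N`, so for small `h > 0` the explicit Euler step
`ρ + h • KRHS ρ = (1 - h m - h (a⁻ ∗ ρ)) ρ + h (a⁺ ∗ ρ)` is a nonnegative function bounded by
`(1 + h (⟨a⁺⟩ - m)) N`. Since `ρ (s + h) = ρ s + h • KRHS (ρ s) + o(h)` in `L∞`, the right Dini
derivative of `N` is at most `(⟨a⁺⟩ - m) N`, and `N` is continuous because `ρ` is differentiable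
in `L∞`. Grönwall's inequality then gives `N s ≤ N 0 * exp (s (⟨a⁺⟩ - m))`. -/

lemma eventually_add_mem_of_mem_nhdsGT {s : Set ℝ} {t : ℝ} (hs : s ∈ 𝓝[>] t) :
    ∀ᶠ h in 𝓝[>] 0, t + h ∈ s := by
  rw [← add_zero t, ← map_add_left_nhdsGT] at hs
  exact hs

lemma frequently_slope_lt_of_eventually_le {f : ℝ → ℝ} {x c : ℝ}
    (hf : ∀ ε > 0, ∀ᶠ h in 𝓝[>] 0, f (x + h) ≤ f x + h * (c + ε)) {r : ℝ} (hr : c < r) :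
    ∃ᶠ z in 𝓝[>] x, (z - x)⁻¹ * (f z - f x) < r := by
  have hev : ∀ᶠ h in 𝓝[>] (0 : ℝ), (x + h - x)⁻¹ * (f (x + h) - f x) < r := by
    filter_upwards [hf ((r - c) / 2) (by linarith), self_mem_nhdsWithin] with h hle hpos
    rw [add_sub_cancel_left, inv_mul_lt_iff₀ hpos]
    nlinarith [mem_Ioi.mp hpos]
  have hmap : Tendsto (x + ·) (𝓝[>] (0 : ℝ)) (𝓝[>] x) := by
    have := map_add_left_nhdsGT (c := x) (a := (0 : ℝ))
    rw [add_zero] at this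
    exact this.le
  exact hmap.frequently hev.frequently

section EssSupDeriv

variable {α E : Type*} [MeasurableSpace α] {μ : Measure α} [NormedAddCommGroup E]

lemma eLpNorm_top_le_add_eLpNorm_sub (f g : α → E) :
    eLpNorm f ⊤ μ ≤ eLpNorm g ⊤ μ + eLpNorm (f - g) ⊤ μ := by
  simpa only [eLpNorm_exponent_top, add_sub_cancel] using
    eLpNormEssSup_add_le (f := g) (g := f - g)

variable [NormedSpace ℝ E]

def HasEssSupDerivWithinAt (ρ : ℝ → α → E) (g : α → E) (μ : Measure α) (I : Set ℝ) (t : ℝ) :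
    Prop :=
  Tendsto (fun h : ℝ => eLpNorm (ρ (t + h) - ρ t - h • g) ⊤ μ / ENNReal.ofReal |h|)
    (𝓝[{h : ℝ | h ≠ 0 ∧ t + h ∈ I}] 0) (𝓝 0)

variable {ρ : ℝ → α → E} {g : α → E} {I : Set ℝ} {t : ℝ}

lemma HasEssSupDerivWithinAt.eventually_eLpNorm_sub_le (hd : HasEssSupDerivWithinAt ρ g μ I t) :
    ∀ᶠ z in 𝓝[I] t, eLpNorm (ρ z - ρ t) ⊤ μ ≤ ENNReal.ofReal |z - t| * (1 + eLpNorm g ⊤ μ) := by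
  have hq := hd.eventually (gt_mem_nhds zero_lt_one)
  rw [eventually_nhdsWithin_iff, Metric.eventually_nhds_iff] at hq
  obtain ⟨δ, hδ, hq⟩ := hq
  rw [eventually_nhdsWithin_iff, Metric.eventually_nhds_iff]
  refine ⟨δ, hδ, fun z hz hzI => ?_⟩
  rcases eq_or_ne z t with rfl | hne
  · simp
  have hh : z - t ≠ 0 := sub_ne_zero.mpr hne
  have hrem : eLpNorm (ρ z - ρ t - (z - t) • g) ⊤ μ ≤ ENNReal.ofReal |z - t| := by
    have h1 := (hq (by simpa [Real.dist_eq] using hz) ⟨hh, by simpa using hzI⟩).le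
    rw [add_sub_cancel, ENNReal.div_le_iff (by simpa using hh) ENNReal.ofReal_ne_top,
      one_mul] at h1
    exact h1
  calc eLpNorm (ρ z - ρ t) ⊤ μ
      ≤ eLpNorm ((z - t) • g) ⊤ μ + eLpNorm (ρ z - ρ t - (z - t) • g) ⊤ μ :=
        eLpNorm_top_le_add_eLpNorm_sub _ _
    _ ≤ ENNReal.ofReal |z - t| * eLpNorm g ⊤ μ + ENNReal.ofReal |z - t| := by
        rw [eLpNorm_const_smul, Real.enorm_eq_ofReal_abs]
        gcongr
    _ = ENNReal.ofReal |z - t| * (1 + eLpNorm g ⊤ μ) := by ring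

lemma continuousOn_lpNorm_top (hmem : ∀ t ∈ I, MemLp (ρ t) ⊤ μ)
    (hderiv : ∀ t ∈ I, ∃ g, eLpNorm g ⊤ μ < ⊤ ∧ HasEssSupDerivWithinAt ρ g μ I t) :
    ContinuousOn (fun t => lpNorm (ρ t) ⊤ μ) I := by
  intro t ht
  obtain ⟨g, hg, hd⟩ := hderiv t ht
  have hdist : Tendsto (fun z => eLpNorm (ρ z - ρ t) ⊤ μ) (𝓝[I] t) (𝓝 0) := by
    have hlin :
        Tendsto (fun z => ENNReal.ofReal |z - t| * (1 + eLpNorm g ⊤ μ)) (𝓝[I] t) (𝓝 0) := by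
      have : Tendsto (fun z => ENNReal.ofReal |z - t|) (𝓝 t) (𝓝 0) := by
        have h : Continuous fun z : ℝ => ENNReal.ofReal |z - t| :=
          ENNReal.continuous_ofReal.comp (by fun_prop)
        simpa using h.tendsto t
      simpa using (ENNReal.Tendsto.mul_const this (Or.inr (by finiteness))).mono_left
        nhdsWithin_le_nhds
    exact tendsto_of_tendsto_of_tendsto_of_le_of_le' tendsto_const_nhds hlin
      (Eventually.of_forall fun _ => bot_le) hd.eventually_eLpNorm_sub_le
  have hnorm : Tendsto (fun z => eLpNorm (ρ z) ⊤ μ) (𝓝[I] t) (𝓝 (eLpNorm (ρ t) ⊤ μ)) := by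
    have hlow := ENNReal.Tendsto.sub tendsto_const_nhds hdist (Or.inl (hmem t ht).2.ne)
    have hup := (tendsto_const_nhds (x := eLpNorm (ρ t) ⊤ μ)).add hdist
    rw [tsub_zero] at hlow
    rw [add_zero] at hup
    refine tendsto_of_tendsto_of_tendsto_of_le_of_le hlow hup (fun z => ?_) (fun z => ?_)
    · rw [tsub_le_iff_right, eLpNorm_sub_comm]
      exact eLpNorm_top_le_add_eLpNorm_sub _ _
    · exact eLpNorm_top_le_add_eLpNorm_sub _ _
  rw [ContinuousWithinAt, ← toReal_eLpNorm (hmem t ht).1]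
  refine ((ENNReal.tendsto_toReal (hmem t ht).2.ne).comp hnorm).congr' ?_
  filter_upwards [self_mem_nhdsWithin] with z hz
  exact toReal_eLpNorm (hmem z hz).1

lemma HasEssSupDerivWithinAt.eventually_eLpNorm_le (hd : HasEssSupDerivWithinAt ρ g μ I t)
    (hI : I ∈ 𝓝[>] t) {ε : ℝ} (hε : 0 < ε) :
    ∀ᶠ h in 𝓝[>] 0,
      eLpNorm (ρ (t + h)) ⊤ μ ≤ eLpNorm (ρ t + h • g) ⊤ μ + ENNReal.ofReal (ε * h) := by
  have hS : Tendsto id (𝓝[>] (0 : ℝ)) (𝓝[{h : ℝ | h ≠ 0 ∧ t + h ∈ I}] 0) := by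
    refine tendsto_nhdsWithin_of_tendsto_nhds_of_eventually_within _
      (tendsto_id.mono_left nhdsWithin_le_nhds) ?_
    filter_upwards [self_mem_nhdsWithin, eventually_add_mem_of_mem_nhdsGT hI] with h hpos hh
      using ⟨hpos.ne', hh⟩
  filter_upwards [(hd.comp hS).eventually (gt_mem_nhds (ENNReal.ofReal_pos.mpr hε)),
    self_mem_nhdsWithin] with h hq hpos
  have hrem : eLpNorm (ρ (t + h) - ρ t - h • g) ⊤ μ ≤ ENNReal.ofReal (ε * h) := by
    have h1 := hq.le
    simp only [Function.comp_apply, id] at h1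
    rw [ENNReal.div_le_iff (by simpa using hpos.ne') ENNReal.ofReal_ne_top,
      abs_of_pos hpos, ← ENNReal.ofReal_mul hε.le] at h1
    exact h1
  calc eLpNorm (ρ (t + h)) ⊤ μ
      ≤ eLpNorm (ρ t + h • g) ⊤ μ + eLpNorm (ρ (t + h) - (ρ t + h • g)) ⊤ μ :=
        eLpNorm_top_le_add_eLpNorm_sub _ _
    _ ≤ eLpNorm (ρ t + h • g) ⊤ μ + ENNReal.ofReal (ε * h) := by
        rw [← sub_sub]; gcongr

lemma ae_mem_Icc_lpNorm_top {f : α → ℝ} (hf : MemLp f ⊤ μ) (hpos : ∀ᵐ x ∂μ, 0 ≤ f x) :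
    ∀ᵐ x ∂μ, f x ∈ Icc 0 (lpNorm f ⊤ μ) := by
  filter_upwards [hpos, ae_le_lpNorm_exponent_top hf] with x hx hle
  exact ⟨hx, (le_abs_self _).trans hle⟩

end EssSupDeriv

section Kinetic

variable {d : ℕ}

lemma conv_mem_Icc {a g : Rd d → ℝ} (ha_int : Integrable a volume)
    (ha_pos : ∀ᵐ x ∂volume, 0 ≤ a x) {N : ℝ} (hg : ∀ᵐ y ∂volume, g y ∈ Icc 0 N) (x : Rd d) :
    conv a g x ∈ Icc 0 ((∫ y, a y) * N) := by
  have ha_x : ∀ᵐ y ∂volume, 0 ≤ a (x - y) :=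
    (Measure.measurePreserving_sub_left volume x).quasiMeasurePreserving.ae ha_pos
  refine ⟨integral_nonneg_of_ae ?_, ?_⟩
  · filter_upwards [ha_x, hg] with y hay hgy using mul_nonneg hay hgy.1
  calc conv a g x ≤ ∫ y, a (x - y) * N := by
        refine integral_mono_of_nonneg ?_ ((ha_int.comp_sub_left x).mul_const N) ?_
        · filter_upwards [ha_x, hg] with y hay hgy using mul_nonneg hay hgy.1
        · filter_upwards [ha_x, hg] with y hay hgy using mul_le_mul_of_nonneg_left hgy.2 hay
    _ = (∫ y, a y) * N := by rw [integral_mul_const, integral_sub_left_eq_self a volume x]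

lemma abs_KRHS_le {m r cm cp N Am A : ℝ} (hr : r ∈ Icc 0 N) (hcm : cm ∈ Icc 0 (Am * N))
    (hcp : cp ∈ Icc 0 (A * N)) :
    |-m * r - cm * r + cp| ≤ |m| * N + Am * N * N + A * N := by
  have hmr : |m * r| ≤ |m| * N := by
    rw [abs_mul, abs_of_nonneg hr.1]
    exact mul_le_mul_of_nonneg_left hr.2 (abs_nonneg m)
  have hcmr : cm * r ≤ Am * N * N := mul_le_mul hcm.2 hr.2 hr.1 (hcm.1.trans hcm.2)
  rw [abs_le] at hmr ⊢
  constructor <;> nlinarith [mul_nonneg hcm.1 hr.1, hcp.1, hcp.2]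

lemma abs_euler_step_le {m h r cm cp N Am A : ℝ} (hr : r ∈ Icc 0 N) (hcm : cm ∈ Icc 0 (Am * N))
    (hcp : cp ∈ Icc 0 (A * N)) (hh : 0 ≤ h) (hsmall : h * (m + Am * N) ≤ 1) :
    |r + h * (-m * r - cm * r + cp)| ≤ (1 + h * (A - m)) * N := by
  have hcm' : h * cm ≤ h * (Am * N) := mul_le_mul_of_nonneg_left hcm.2 hh
  have hcoef : 0 ≤ 1 - h * m - h * cm := by nlinarith
  have hval : r + h * (-m * r - cm * r + cp) = (1 - h * m - h * cm) * r + h * cp := by ring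
  rw [hval, abs_of_nonneg (by nlinarith [mul_nonneg hcoef hr.1, mul_nonneg hh hcp.1])]
  nlinarith [mul_le_mul_of_nonneg_left hr.2 hcoef, mul_le_mul_of_nonneg_left hcp.2 hh,
    mul_nonneg (mul_nonneg hh hcm.1) (hr.1.trans hr.2)]

lemma eLpNorm_KRHS_lt_top {m : ℝ} {ap am ρ : Rd d → ℝ}
    (hap_int : Integrable ap volume) (ham_int : Integrable am volume)
    (hap_pos : ∀ᵐ x ∂volume, 0 ≤ ap x) (ham_pos : ∀ᵐ x ∂volume, 0 ≤ am x)
    {N : ℝ} (hρ : ∀ᵐ y ∂volume, ρ y ∈ Icc 0 N) :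
    eLpNorm (KRHS m ap am ρ) ⊤ volume < ⊤ := by
  have hbd : ∀ᵐ x ∂volume,
      ‖KRHS m ap am ρ x‖ ≤ |m| * N + (∫ x, am x) * N * N + (∫ x, ap x) * N := by
    filter_upwards [hρ] with x hx
    exact abs_KRHS_le hx (conv_mem_Icc ham_int ham_pos hρ x) (conv_mem_Icc hap_int hap_pos hρ x)
  exact (eLpNorm_exponent_top.trans_le (eLpNormEssSup_le_of_ae_bound hbd)).trans_lt
    ENNReal.ofReal_lt_top

lemma eLpNorm_add_smul_KRHS_le {m h : ℝ} {ap am ρ : Rd d → ℝ}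
    (hap_int : Integrable ap volume) (ham_int : Integrable am volume)
    (hap_pos : ∀ᵐ x ∂volume, 0 ≤ ap x) (ham_pos : ∀ᵐ x ∂volume, 0 ≤ am x)
    {N : ℝ} (hρ : ∀ᵐ y ∂volume, ρ y ∈ Icc 0 N) (hh : 0 ≤ h)
    (hsmall : h * (m + (∫ x, am x) * N) ≤ 1) :
    eLpNorm (ρ + h • KRHS m ap am ρ) ⊤ volume ≤
      ENNReal.ofReal ((1 + h * ((∫ x, ap x) - m)) * N) := by
  refine eLpNorm_exponent_top.trans_le (eLpNormEssSup_le_of_ae_bound ?_)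
  filter_upwards [hρ] with x hx
  exact abs_euler_step_le hx (conv_mem_Icc ham_int ham_pos hρ x)
    (conv_mem_Icc hap_int hap_pos hρ x) hh hsmall

lemma KinSol.hasEssSupDerivWithinAt {m : ℝ} {ap am ρ0 : Rd d → ℝ} {I : Set ℝ}
    {ρ : ℝ → Rd d → ℝ} (hρ : KinSol m ap am I ρ0 ρ) {t : ℝ} (ht : t ∈ I) :
    HasEssSupDerivWithinAt ρ (KRHS m ap am (ρ t)) volume I t :=
  hρ.hasDeriv t ht

lemma KinSol.eventually_lpNorm_le {m : ℝ} {ap am ρ0 : Rd d → ℝ} {I : Set ℝ}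
    {ρ : ℝ → Rd d → ℝ} (hρ : KinSol m ap am I ρ0 ρ)
    (hap_int : Integrable ap volume) (ham_int : Integrable am volume)
    (hap_pos : ∀ᵐ x ∂volume, 0 ≤ ap x) (ham_pos : ∀ᵐ x ∂volume, 0 ≤ am x)
    (hρ_pos : ∀ s ∈ I, ∀ᵐ x ∂volume, 0 ≤ ρ s x) {t : ℝ} (ht : t ∈ I) (hI : I ∈ 𝓝[>] t)
    {ε : ℝ} (hε : 0 < ε) :
    ∀ᶠ h in 𝓝[>] 0, lpNorm (ρ (t + h)) ⊤ volume ≤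
      lpNorm (ρ t) ⊤ volume + h * (((∫ x, ap x) - m) * lpNorm (ρ t) ⊤ volume + ε) := by
  set N := lpNorm (ρ t) ⊤ volume
  have hN := ae_mem_Icc_lpNorm_top ⟨hρ.meas t ht, hρ.bdd t ht⟩ (hρ_pos t ht)
  have hsmall : ∀ᶠ h in 𝓝[>] (0 : ℝ), h * (m + (∫ x, am x) * N) ≤ 1 := by
    have : Tendsto (fun h : ℝ => h * (m + (∫ x, am x) * N)) (𝓝 0) (𝓝 0) := by
      simpa using (tendsto_id (x := 𝓝 (0 : ℝ))).mul_const (m + (∫ x, am x) * N)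
    exact (this.eventually (eventually_le_nhds one_pos)).filter_mono nhdsWithin_le_nhds
  filter_upwards [(hρ.hasEssSupDerivWithinAt ht).eventually_eLpNorm_le hI hε, hsmall,
    self_mem_nhdsWithin, eventually_add_mem_of_mem_nhdsGT hI] with h hstep hsmall hh hmem
  have hpos : 0 < h := hh
  have heuler := eLpNorm_add_smul_KRHS_le hap_int ham_int hap_pos ham_pos hN hpos.le hsmall
  have hcoef : 0 ≤ (1 + h * ((∫ x, ap x) - m)) * N := by
    have hA : 0 ≤ ∫ x, ap x := integral_nonneg_of_ae hap_pos
    have hAm : 0 ≤ ∫ x, am x := integral_nonneg_of_ae ham_pos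
    have hN0 : 0 ≤ N := lpNorm_nonneg
    nlinarith [mul_nonneg hpos.le (mul_nonneg hAm hN0), mul_nonneg hpos.le hA]
  calc lpNorm (ρ (t + h)) ⊤ volume = (eLpNorm (ρ (t + h)) ⊤ volume).toReal :=
        (toReal_eLpNorm (hρ.meas _ hmem)).symm
    _ ≤ (1 + h * ((∫ x, ap x) - m)) * N + ε * h := by
        refine ENNReal.toReal_le_of_le_ofReal (by positivity) (hstep.trans ?_)
        rw [ENNReal.ofReal_add hcoef (by positivity)]
        gcongr
    _ = N + h * (((∫ x, ap x) - m) * N + ε) := by ring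

end Kinetic

theorem statement9_general
    (d : ℕ) (m : ℝ)
    (aplus aminus : Rd d → ℝ)
    (hap_int : Integrable aplus volume) (ham_int : Integrable aminus volume)
    (hap_pos : ∀ᵐ x ∂volume, 0 ≤ aplus x)
    (ham_pos : ∀ᵐ x ∂volume, 0 ≤ aminus x)
    (t : ℝ)
    (ρ0 : Rd d → ℝ)
    (ρ : ℝ → Rd d → ℝ)
    (hρ : KinSol m aplus aminus (Set.Icc 0 t) ρ0 ρ)
    (hρ_pos : ∀ s ∈ Set.Icc (0 : ℝ) t, ∀ᵐ x ∂volume, 0 ≤ ρ s x) :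
    ∀ s ∈ Set.Icc (0 : ℝ) t,
      eLpNorm (ρ s) ⊤ volume ≤
        eLpNorm ρ0 ⊤ volume *
          ENNReal.ofReal (Real.exp (-s * (m - ∫ x, aplus x))) := by
  intro s hs
  have hmem : ∀ u ∈ Icc 0 t, MemLp (ρ u) ⊤ volume := fun u hu => ⟨hρ.meas u hu, hρ.bdd u hu⟩
  have hcont : ContinuousOn (fun u => lpNorm (ρ u) ⊤ volume) (Icc 0 t) :=
    continuousOn_lpNorm_top hmem fun u hu => ⟨_, eLpNorm_KRHS_lt_top hap_int ham_int hap_pos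
      ham_pos (ae_mem_Icc_lpNorm_top (hmem u hu) (hρ_pos u hu)), hρ.hasEssSupDerivWithinAt hu⟩
  have hslope : ∀ u ∈ Ico 0 t, ∀ r, ((∫ x, aplus x) - m) * lpNorm (ρ u) ⊤ volume < r →
      ∃ᶠ z in 𝓝[>] u, (z - u)⁻¹ * (lpNorm (ρ z) ⊤ volume - lpNorm (ρ u) ⊤ volume) < r :=
    fun u hu r hr => frequently_slope_lt_of_eventually_le (fun ε hε => hρ.eventually_lpNorm_le
      hap_int ham_int hap_pos ham_pos hρ_pos (Ico_subset_Icc_self hu) (Icc_mem_nhdsGT_of_mem hu)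
      hε) hr
  have hgron := le_gronwallBound_of_liminf_deriv_right_le hcont hslope le_rfl
    (fun _ _ => (add_zero _).ge) s hs
  rw [gronwallBound_ε0, sub_zero] at hgron
  rw [← ofReal_lpNorm (hmem s hs), ← eLpNorm_congr_ae hρ.init,
    ← ofReal_lpNorm (hmem 0 ⟨le_rfl, hs.1.trans hs.2⟩), ← ENNReal.ofReal_mul lpNorm_nonneg]
  exact ENNReal.ofReal_le_ofReal (hgron.trans_eq (by ring_nf))

theorem statement9
    (d : ℕ) (hd : 1 ≤ d) (m : ℝ) (hm : 0 ≤ m)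
    (aplus aminus : Rd d → ℝ)
    (hap_int : Integrable aplus volume) (ham_int : Integrable aminus volume)
    (hap_bdd : eLpNorm aplus ⊤ volume < ⊤) (ham_bdd : eLpNorm aminus ⊤ volume < ⊤)
    (hap_even : ∀ᵐ x ∂volume, aplus (-x) = aplus x)
    (ham_even : ∀ᵐ x ∂volume, aminus (-x) = aminus x)
    (hap_pos : ∀ᵐ x ∂volume, 0 ≤ aplus x)
    (ham_pos : ∀ᵐ x ∂volume, 0 ≤ aminus x)
    (t : ℝ) (ht : 0 ≤ t)
    (ρ0 : Rd d → ℝ) (hρ0_meas : AEStronglyMeasurable ρ0 volume)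
    (hρ0_bdd : eLpNorm ρ0 ⊤ volume < ⊤)
    (hρ0_pos : ∀ᵐ x ∂volume, 0 ≤ ρ0 x)
    (ρ : ℝ → Rd d → ℝ)
    (hρ : KinSol m aplus aminus (Set.Icc 0 t) ρ0 ρ)
    (hρ_pos : ∀ s ∈ Set.Icc (0 : ℝ) t, ∀ᵐ x ∂volume, 0 ≤ ρ s x) :
    ∀ s ∈ Set.Icc (0 : ℝ) t,
      eLpNorm (ρ s) ⊤ volume ≤
        eLpNorm ρ0 ⊤ volume *
          ENNReal.ofReal (Real.exp (-s * (m - ∫ x, aplus x))) :=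
  statement9_general d m aplus aminus hap_int ham_int hap_pos ham_pos t ρ0 ρ hρ hρ_pos
end
end

section
/- Let T > 0, b > 0, and assume m + ε₀ > 0 where ε₀ = max(⟨a⁺⟩ − m, 0). Let ρ₀ ∈ L∞(ℝ^d) satisfy 0 ≤ ρ₀ ≤ b a.e., and let u: [0,T] → L∞(ℝ^d) be continuous with u_t ≥ 0 a.e. and ‖u_t‖_{L∞} ≤ b for all t ∈ [0,T]. Then for every t ∈ [0,T], ‖F(u)_t‖_{L∞} ≤ ‖ρ₀‖_{L∞} e^{−t(m+ε₀)} + b (⟨a⁺⟩/(m+ε₀)) (1 − e^{−t(m+ε₀)}) ≤ b; in particular F maps the set of nonnegative continuous curves bounded by b into itself. -/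
/-!
Write `c = m + ε₀` and `K(τ) = ∫_τ^t e^{ε₀ s} (a⁻ ∗ u_s)(x) ds`. Since `u ≥ 0`, `K ≥ 0`, so every
factor `exp(-c(t - τ) - K(τ))` is at most `exp(-c(t - τ))`; since `0 ≤ u ≤ b`,
`0 ≤ a⁺ ∗ u_τ ≤ b⟨a⁺⟩`. Integrating the kernel `exp(-c(t - τ))` over `(0, t]` gives
`‖F(u)_t‖_∞ ≤ ‖ρ₀‖_∞ e^{-ct} + b⟨a⁺⟩ (1 - e^{-ct}) / c`, a convex combination of `‖ρ₀‖_∞ ≤ b` and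
`b⟨a⁺⟩ / c ≤ b`, the latter because `c = max(m, ⟨a⁺⟩) ≥ ⟨a⁺⟩`.
-/

open MeasureTheory Filter Set Topology
open scoped ENNReal

noncomputable section

/-- the fixed-point map `F` from the proof of Theorem 3.1 (eq. (26)):
`(F(u)_t)(x) = ρ₀(x) exp(−(m+ε₀)t − ∫₀^t e^{ε₀τ}(a⁻ ∗ u_τ)(x) dτ)
 + ∫₀^t (a⁺ ∗ u_τ)(x) exp(−(m+ε₀)(t−τ) − ∫_τ^t e^{ε₀ s}(a⁻ ∗ u_s)(x) ds) dτ`. -/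
def Fmap {d : ℕ} (m eps0 : ℝ) (ap am : Rd d → ℝ) (ρ0 : Rd d → ℝ)
    (u : ℝ → Rd d → ℝ) (t : ℝ) (x : Rd d) : ℝ :=
  ρ0 x * Real.exp (-(m + eps0) * t -
      ∫ τ in Set.Ioc (0 : ℝ) t, Real.exp (eps0 * τ) * conv am (u τ) x)
    + ∫ τ in Set.Ioc (0 : ℝ) t, conv ap (u τ) x *
        Real.exp (-(m + eps0) * (t - τ) -
          ∫ s in Set.Ioc τ t, Real.exp (eps0 * s) * conv am (u s) x)

lemma ae_norm_le_of_eLpNorm_top_le {α F : Type*} [MeasurableSpace α] {μ : Measure α}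
    [NormedAddCommGroup F] {f : α → F} {C : ℝ} (hC : 0 ≤ C)
    (h : eLpNorm f ⊤ μ ≤ ENNReal.ofReal C) : ∀ᵐ x ∂μ, ‖f x‖ ≤ C := by
  rw [eLpNorm_exponent_top] at h
  filter_upwards [ae_le_eLpNormEssSup (f := f) (μ := μ)] with x hx
  rw [← ENNReal.ofReal_le_ofReal_iff hC, ofReal_norm]
  exact hx.trans h

section Convolution

variable {d : ℕ} {a ρ : Rd d → ℝ}

lemma ae_nonneg_comp_sub_left (ha : ∀ᵐ x, 0 ≤ a x) (x : Rd d) : ∀ᵐ y, 0 ≤ a (x - y) :=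
  (Measure.measurePreserving_sub_left volume x).quasiMeasurePreserving.ae ha

lemma conv_nonneg (ha : ∀ᵐ x, 0 ≤ a x) (hρ : ∀ᵐ x, 0 ≤ ρ x) (x : Rd d) : 0 ≤ conv a ρ x :=
  integral_nonneg_of_ae <| by
    filter_upwards [ae_nonneg_comp_sub_left ha x, hρ] with y hay hρy using mul_nonneg hay hρy

lemma conv_le_mul_integral {b : ℝ} (ha_int : Integrable a) (ha : ∀ᵐ x, 0 ≤ a x)
    (hρ : ∀ᵐ x, 0 ≤ ρ x) (hρb : ∀ᵐ x, ρ x ≤ b) (x : Rd d) :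
    conv a ρ x ≤ b * ∫ z, a z := by
  have hle : (fun y ↦ a (x - y) * ρ y) ≤ᵐ[volume] fun y ↦ a (x - y) * b := by
    filter_upwards [ae_nonneg_comp_sub_left ha x, hρb] with y hay hρy
    exact mul_le_mul_of_nonneg_left hρy hay
  calc conv a ρ x ≤ ∫ y, a (x - y) * b :=
        integral_mono_of_nonneg (ae_nonneg_comp_sub_left ha x |>.and hρ |>.mono
          fun y hy ↦ mul_nonneg hy.1 hy.2) ((ha_int.comp_sub_left x).mul_const b) hle
    _ = b * ∫ z, a z := by rw [integral_mul_const, integral_sub_left_eq_self a volume x, mul_comm]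

end Convolution

lemma integral_exp_neg_mul_sub {c t : ℝ} (hc : c ≠ 0) (ht : 0 ≤ t) :
    ∫ τ in Ioc 0 t, Real.exp (-c * (t - τ)) = (1 - Real.exp (-c * t)) / c := by
  rw [← intervalIntegral.integral_of_le ht]
  have hsplit : ∀ τ, Real.exp (-c * (t - τ)) = Real.exp (c * τ) * Real.exp (-c * t) := by
    intro τ
    rw [← Real.exp_add]
    ring_nf
  simp_rw [hsplit]
  rw [intervalIntegral.integral_mul_const, intervalIntegral.integral_comp_mul_left _ hc,
    mul_zero, integral_exp, Real.exp_zero, smul_eq_mul, mul_assoc, sub_mul, ← Real.exp_add,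
    neg_mul, add_neg_cancel, Real.exp_zero, one_mul, div_eq_inv_mul]

section Duhamel

variable {a c t M : ℝ} {g k : ℝ → ℝ}

lemma exp_sub_setIntegral_le_exp (hk : ∀ s ∈ Ioc a t, 0 ≤ k s) (y : ℝ) :
    Real.exp (y - ∫ s in Ioc a t, k s) ≤ Real.exp y :=
  Real.exp_le_exp.mpr <| sub_le_self _ <| setIntegral_nonneg measurableSet_Ioc hk

lemma setIntegral_mul_exp_sub_nonneg (hg : ∀ τ ∈ Ioc 0 t, 0 ≤ g τ) :
    0 ≤ ∫ τ in Ioc 0 t, g τ * Real.exp (-c * (t - τ) - ∫ s in Ioc τ t, k s) :=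
  setIntegral_nonneg measurableSet_Ioc fun τ hτ ↦ mul_nonneg (hg τ hτ) (Real.exp_pos _).le

lemma setIntegral_mul_exp_sub_le (hc : c ≠ 0) (ht : 0 ≤ t) (hg : ∀ τ ∈ Ioc 0 t, 0 ≤ g τ)
    (hgM : ∀ τ ∈ Ioc 0 t, g τ ≤ M) (hk : ∀ s ∈ Ioc 0 t, 0 ≤ k s) :
    ∫ τ in Ioc 0 t, g τ * Real.exp (-c * (t - τ) - ∫ s in Ioc τ t, k s) ≤
      M / c * (1 - Real.exp (-c * t)) := by
  have hle : ∀ τ ∈ Ioc 0 t,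
      g τ * Real.exp (-c * (t - τ) - ∫ s in Ioc τ t, k s) ≤ M * Real.exp (-c * (t - τ)) := by
    intro τ hτ
    have hkτ : ∀ s ∈ Ioc τ t, 0 ≤ k s := fun s hs ↦ hk s ⟨hτ.1.trans hs.1, hs.2⟩
    exact mul_le_mul (hgM τ hτ) (exp_sub_setIntegral_le_exp hkτ _) (Real.exp_pos _).le
      ((hg τ hτ).trans (hgM τ hτ))
  calc ∫ τ in Ioc 0 t, g τ * Real.exp (-c * (t - τ) - ∫ s in Ioc τ t, k s)
      ≤ ∫ τ in Ioc 0 t, M * Real.exp (-c * (t - τ)) :=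
        integral_mono_of_nonneg
          (ae_restrict_of_forall_mem measurableSet_Ioc fun τ hτ ↦
            mul_nonneg (hg τ hτ) (Real.exp_pos _).le)
          (Continuous.integrableOn_Ioc (by fun_prop)) (ae_restrict_of_forall_mem measurableSet_Ioc hle)
    _ = M / c * (1 - Real.exp (-c * t)) := by
        rw [integral_const_mul, integral_exp_neg_mul_sub hc ht, mul_div_assoc', div_mul_eq_mul_div]

lemma abs_duhamel_le {r A : ℝ} (hc : c ≠ 0) (ht : 0 ≤ t) (hr : |r| ≤ A)
    (hg : ∀ τ ∈ Ioc 0 t, 0 ≤ g τ) (hgM : ∀ τ ∈ Ioc 0 t, g τ ≤ M)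
    (hk : ∀ s ∈ Ioc 0 t, 0 ≤ k s) :
    |r * Real.exp (-c * t - ∫ s in Ioc 0 t, k s) +
        ∫ τ in Ioc 0 t, g τ * Real.exp (-c * (t - τ) - ∫ s in Ioc τ t, k s)| ≤
      A * Real.exp (-c * t) + M / c * (1 - Real.exp (-c * t)) := by
  refine (abs_add_le _ _).trans (add_le_add ?_ ?_)
  · rw [abs_mul, Real.abs_exp]
    exact mul_le_mul hr (exp_sub_setIntegral_le_exp hk _) (Real.exp_pos _).le
      ((abs_nonneg r).trans hr)
  · rw [abs_of_nonneg (setIntegral_mul_exp_sub_nonneg hg)]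
    exact setIntegral_mul_exp_sub_le hc ht hg hgM hk

end Duhamel

lemma abs_Fmap_le {d : ℕ} {m eps0 b A t : ℝ} {ap am ρ0 : Rd d → ℝ} {u : ℝ → Rd d → ℝ}
    (hc : m + eps0 ≠ 0) (ht : 0 ≤ t) (hap_int : Integrable ap) (hap : ∀ᵐ x, 0 ≤ ap x)
    (ham : ∀ᵐ x, 0 ≤ am x) (hu_pos : ∀ τ ∈ Ioc 0 t, ∀ᵐ x, 0 ≤ u τ x)
    (hu_le : ∀ τ ∈ Ioc 0 t, ∀ᵐ x, u τ x ≤ b) {x : Rd d} (hρ0 : |ρ0 x| ≤ A) :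
    |Fmap m eps0 ap am ρ0 u t x| ≤ A * Real.exp (-(m + eps0) * t) +
      b * ((∫ z, ap z) / (m + eps0)) * (1 - Real.exp (-(m + eps0) * t)) := by
  rw [← mul_div_assoc]
  exact abs_duhamel_le hc ht hρ0 (fun τ hτ ↦ conv_nonneg hap (hu_pos τ hτ) x)
    (fun τ hτ ↦ conv_le_mul_integral hap_int hap (hu_pos τ hτ) (hu_le τ hτ) x)
    (fun s hs ↦ mul_nonneg (Real.exp_pos _).le (conv_nonneg ham (hu_pos s hs) x))

theorem statement10_general
    (d : ℕ) (m : ℝ)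
    (aplus aminus : Rd d → ℝ)
    (hap_int : Integrable aplus volume)
    (hap_pos : ∀ᵐ x ∂volume, 0 ≤ aplus x)
    (ham_pos : ∀ᵐ x ∂volume, 0 ≤ aminus x)
    (eps0 : ℝ) (heps0 : eps0 = max ((∫ x, aplus x) - m) 0)
    (hpos : 0 < m + eps0)
    (T : ℝ) (b : ℝ) (hb : 0 < b)
    (ρ0 : Rd d → ℝ)
    (hρ0_pos : ∀ᵐ x ∂volume, 0 ≤ ρ0 x)
    (hρ0_bdd : ∀ᵐ x ∂volume, ρ0 x ≤ b)
    (u : ℝ → Rd d → ℝ)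
    (hu_pos : ∀ t ∈ Set.Icc (0 : ℝ) T, ∀ᵐ x ∂volume, 0 ≤ u t x)
    (hu_bdd : ∀ t ∈ Set.Icc (0 : ℝ) T, eLpNorm (u t) ⊤ volume ≤ ENNReal.ofReal b)
 :
    ∀ t ∈ Set.Icc (0 : ℝ) T,
      eLpNorm (Fmap m eps0 aplus aminus ρ0 u t) ⊤ volume ≤
          ENNReal.ofReal ((eLpNorm ρ0 ⊤ volume).toReal * Real.exp (-t * (m + eps0)) +
            b * ((∫ x, aplus x) / (m + eps0)) * (1 - Real.exp (-t * (m + eps0)))) ∧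
        (eLpNorm ρ0 ⊤ volume).toReal * Real.exp (-t * (m + eps0)) +
            b * ((∫ x, aplus x) / (m + eps0)) * (1 - Real.exp (-t * (m + eps0))) ≤ b := by
  rintro t ⟨ht0, htT⟩
  have hIoc : ∀ τ ∈ Ioc 0 t, τ ∈ Icc 0 T := fun τ hτ ↦ ⟨hτ.1.le, hτ.2.trans htT⟩
  have hρ0_abs : ∀ᵐ x, |ρ0 x| ≤ b := by
    filter_upwards [hρ0_pos, hρ0_bdd] with x h0 hle using abs_le.mpr ⟨by linarith, hle⟩
  have hρ0_norm : eLpNorm ρ0 ⊤ volume ≤ ENNReal.ofReal b :=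
    eLpNorm_exponent_top (f := ρ0) ▸ eLpNormEssSup_le_of_ae_bound hρ0_abs
  have hρ0_A : ∀ᵐ x, |ρ0 x| ≤ (eLpNorm ρ0 ⊤ volume).toReal :=
    ae_norm_le_of_eLpNorm_top_le ENNReal.toReal_nonneg
      (ENNReal.ofReal_toReal (hρ0_norm.trans_lt ENNReal.ofReal_lt_top).ne).ge
  have hu_le : ∀ τ ∈ Ioc 0 t, ∀ᵐ x, u τ x ≤ b := fun τ hτ ↦
    (ae_norm_le_of_eLpNorm_top_le hb.le (hu_bdd τ (hIoc τ hτ))).mono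
      fun x hx ↦ le_of_abs_le hx
  have hI : ∫ x, aplus x ≤ m + eps0 := by
    have := le_max_left ((∫ x, aplus x) - m) 0
    linarith
  rw [show -t * (m + eps0) = -(m + eps0) * t by ring]
  refine ⟨?_, ?_⟩
  · rw [eLpNorm_exponent_top]
    refine eLpNormEssSup_le_of_ae_bound (hρ0_A.mono fun x hx ↦ ?_)
    exact abs_Fmap_le hpos.ne' ht0 hap_int hap_pos ham_pos
      (fun τ hτ ↦ hu_pos τ (hIoc τ hτ)) hu_le hx
  · have he : Real.exp (-(m + eps0) * t) ≤ 1 := Real.exp_le_one_iff.mpr (by nlinarith)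
    calc _ ≤ b * Real.exp (-(m + eps0) * t) + b * 1 * (1 - Real.exp (-(m + eps0) * t)) := by
          gcongr
          · exact ENNReal.toReal_le_of_le_ofReal hb.le hρ0_norm
          exact (div_le_one hpos).mpr hI
      _ = b := by ring

theorem statement10
    (d : ℕ) (hd : 1 ≤ d) (m : ℝ) (hm : 0 ≤ m)
    (aplus aminus : Rd d → ℝ)
    (hap_int : Integrable aplus volume) (ham_int : Integrable aminus volume)
    (hap_bdd : eLpNorm aplus ⊤ volume < ⊤) (ham_bdd : eLpNorm aminus ⊤ volume < ⊤)
    (hap_even : ∀ᵐ x ∂volume, aplus (-x) = aplus x)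
    (ham_even : ∀ᵐ x ∂volume, aminus (-x) = aminus x)
    (hap_pos : ∀ᵐ x ∂volume, 0 ≤ aplus x)
    (ham_pos : ∀ᵐ x ∂volume, 0 ≤ aminus x)
    (eps0 : ℝ) (heps0 : eps0 = max ((∫ x, aplus x) - m) 0)
    (hpos : 0 < m + eps0)
    (T : ℝ) (hT : 0 < T) (b : ℝ) (hb : 0 < b)
    (ρ0 : Rd d → ℝ) (hρ0_meas : AEStronglyMeasurable ρ0 volume)
    (hρ0_pos : ∀ᵐ x ∂volume, 0 ≤ ρ0 x)
    (hρ0_bdd : ∀ᵐ x ∂volume, ρ0 x ≤ b)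
    (u : ℝ → Rd d → ℝ)
    (hu_meas : ∀ t ∈ Set.Icc (0 : ℝ) T, AEStronglyMeasurable (u t) volume)
    (hu_pos : ∀ t ∈ Set.Icc (0 : ℝ) T, ∀ᵐ x ∂volume, 0 ≤ u t x)
    (hu_bdd : ∀ t ∈ Set.Icc (0 : ℝ) T, eLpNorm (u t) ⊤ volume ≤ ENNReal.ofReal b)
    (hu_cont : ∀ t ∈ Set.Icc (0 : ℝ) T,
      Tendsto (fun s : ℝ => eLpNorm (u s - u t) ⊤ volume) (𝓝[Set.Icc (0 : ℝ) T] t) (𝓝 0))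
 :
    ∀ t ∈ Set.Icc (0 : ℝ) T,
      eLpNorm (Fmap m eps0 aplus aminus ρ0 u t) ⊤ volume ≤
          ENNReal.ofReal ((eLpNorm ρ0 ⊤ volume).toReal * Real.exp (-t * (m + eps0)) +
            b * ((∫ x, aplus x) / (m + eps0)) * (1 - Real.exp (-t * (m + eps0)))) ∧
        (eLpNorm ρ0 ⊤ volume).toReal * Real.exp (-t * (m + eps0)) +
            b * ((∫ x, aplus x) / (m + eps0)) * (1 - Real.exp (-t * (m + eps0))) ≤ b :=
  statement10_general d m aplus aminus hap_int hap_pos ham_pos eps0 heps0 hpos T b hb ρ0 hρ0_pos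
    hρ0_bdd u hu_pos hu_bdd
end
end

section
/- Let T > 0, b > 0, and assume m + ε₀ > 0 where ε₀ = max(⟨a⁺⟩ − m, 0). Let ρ₀ ∈ L∞(ℝ^d) satisfy 0 ≤ ρ₀ ≤ b a.e., and let u, ũ: [0,T] → L∞(ℝ^d) be continuous curves with nonnegative values and sup_{t∈[0,T]} ‖u_t‖_{L∞} ≤ b, sup_{t∈[0,T]} ‖ũ_t‖_{L∞} ≤ b. Then sup_{t∈[0,T]} ‖F(u)_t − F(ũ)_t‖_{L∞} ≤ q(T) · sup_{t∈[0,T]} ‖u_t − ũ_t‖_{L∞}, where q(T) = b ⟨a⁻⟩ ∫₀^T e^{ε₀ s} ds + (1 − e^{−(m+ε₀)T}). In particular, F is a contraction on this set for all sufficiently small T. -/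
open MeasureTheory Filter Set Topology
open scoped ENNReal

noncomputable section

/-! For fixed `x`, `F(u)_t(x)` is the variation-of-constants formula for
`y' = g - (L + c) y`, `y 0 = ρ₀ x`, with source `g = a⁺ ∗ u_τ (x)`, damping
`c = e^{ε₀τ} a⁻ ∗ u_τ (x) ≥ 0` and `L = m + ε₀ ≥ ⟨a⁺⟩`. Because `exp` is `1`-Lipschitz on
`(-∞, 0]`, replacing `u` by `ũ` changes the initial term by at most
`e^{-Lt} b ⟨a⁻⟩ ∫₀^T e^{ε₀s} ds ‖u - ũ‖` and the Duhamel integrand by at most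
`L e^{-L(t-τ)} (1 + b ⟨a⁻⟩ ∫₀^T e^{ε₀s} ds) ‖u - ũ‖`; as `∫₀^t L e^{-L(t-τ)} dτ = 1 - e^{-Lt}`,
the two add up to at most `q(T) ‖u - ũ‖`. Finally `q` is continuous and `q(0) = 0`. -/

open Real

theorem abs_exp_sub_sub_exp_sub_le (a : ℝ) {I J : ℝ} (hI : 0 ≤ I) (hJ : 0 ≤ J) :
    |exp (a - I) - exp (a - J)| ≤ exp a * |I - J| := by
  wlog hIJ : I ≤ J generalizing I J
  · rw [abs_sub_comm, abs_sub_comm I]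
    exact this hJ hI (le_of_not_ge hIJ)
  have hfac : exp (a - I) - exp (a - J) = exp (a - I) * (1 - exp (-(J - I))) := by
    rw [mul_sub, mul_one, ← exp_add]
    ring_nf
  have h1 : 1 - exp (-(J - I)) ≤ J - I := by linarith [one_sub_le_exp_neg (J - I)]
  have h2 : 0 ≤ 1 - exp (-(J - I)) := sub_nonneg.2 (exp_le_one_iff.2 (by linarith))
  have h3 : exp (a - I) ≤ exp a := exp_le_exp.2 (by linarith)
  rw [hfac, abs_of_nonneg (mul_nonneg (exp_pos _).le h2), abs_sub_comm, abs_of_nonneg (by linarith)]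
  exact mul_le_mul h3 h1 h2 (exp_pos _).le

theorem abs_mul_exp_sub_sub_mul_exp_sub_le (a g g' : ℝ) {I J : ℝ} (hI : 0 ≤ I) (hJ : 0 ≤ J) :
    |g * exp (a - I) - g' * exp (a - J)| ≤ (|g - g'| + |g'| * |I - J|) * exp a := by
  calc |g * exp (a - I) - g' * exp (a - J)|
        = |(g - g') * exp (a - I) + g' * (exp (a - I) - exp (a - J))| := by ring_nf
    _ ≤ |(g - g') * exp (a - I)| + |g' * (exp (a - I) - exp (a - J))| := abs_add_le _ _
    _ = |g - g'| * exp (a - I) + |g'| * |exp (a - I) - exp (a - J)| := by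
        rw [abs_mul, abs_mul, abs_of_pos (exp_pos _)]
    _ ≤ |g - g'| * exp a + |g'| * (exp a * |I - J|) :=
        add_le_add (mul_le_mul_of_nonneg_left (exp_le_exp.2 (by linarith)) (abs_nonneg _))
          (mul_le_mul_of_nonneg_left (abs_exp_sub_sub_exp_sub_le a hI hJ) (abs_nonneg _))
    _ = (|g - g'| + |g'| * |I - J|) * exp a := by ring

theorem continuousOn_setIntegral_Ioc_left {c : ℝ → ℝ} {r t : ℝ} (hc : IntegrableOn c (uIcc r t)) :
    ContinuousOn (fun τ => ∫ s in Ioc τ t, c s) (Icc r t) :=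
  ((intervalIntegral.continuousOn_primitive_interval_left hc).mono Icc_subset_uIcc).congr
    fun _ hτ => (intervalIntegral.integral_of_le hτ.2).symm

theorem integral_Ioc_mul_exp_neg_mul_sub (L : ℝ) {t : ℝ} (ht : 0 ≤ t) :
    ∫ τ in Ioc 0 t, L * exp (-L * (t - τ)) = 1 - exp (-L * t) := by
  have hderiv : ∀ τ, HasDerivAt (fun τ => exp (-L * (t - τ))) (L * exp (-L * (t - τ))) τ :=
    fun τ => by
      convert (((hasDerivAt_id' τ).const_sub t).const_mul (-L)).exp using 1
      ring
  rw [← intervalIntegral.integral_of_le ht,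
    intervalIntegral.integral_eq_sub_of_hasDerivAt (fun τ _ => hderiv τ)
      ((by fun_prop : Continuous fun τ => L * exp (-L * (t - τ))).intervalIntegrable _ _)]
  simp

def duhamel (L ρ : ℝ) (g c : ℝ → ℝ) (t : ℝ) : ℝ :=
  ρ * exp (-L * t - ∫ τ in Ioc 0 t, c τ) +
    ∫ τ in Ioc 0 t, g τ * exp (-L * (t - τ) - ∫ s in Ioc τ t, c s)

section Duhamel

variable {L t : ℝ} {g g' c c' δ : ℝ → ℝ}

theorem integrableOn_Ioc_mul_exp_sub_integral (ht : 0 ≤ t) (hg : ContinuousOn g (Icc 0 t))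
    (hc : ContinuousOn c (Icc 0 t)) :
    IntegrableOn (fun τ => g τ * exp (-L * (t - τ) - ∫ s in Ioc τ t, c s)) (Ioc 0 t) := by
  have hI := continuousOn_setIntegral_Ioc_left (by rw [uIcc_of_le ht]; exact hc.integrableOn_Icc)
  refine (ContinuousOn.integrableOn_Icc ?_).mono_set Ioc_subset_Icc_self
  exact hg.mul (((continuousOn_const.mul (continuousOn_const.sub continuousOn_id)).sub hI).rexp)

theorem abs_integral_Ioc_sub_le (hc : ContinuousOn c (Icc 0 t)) (hc' : ContinuousOn c' (Icc 0 t))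
    (hδ : ContinuousOn δ (Icc 0 t)) (hcc' : ∀ s ∈ Icc 0 t, |c s - c' s| ≤ δ s) {τ : ℝ}
    (hτ : 0 ≤ τ) :
    |(∫ s in Ioc τ t, c s) - ∫ s in Ioc τ t, c' s| ≤ ∫ s in Ioc 0 t, δ s := by
  have hsub : Ioc τ t ⊆ Icc 0 t := fun s hs => ⟨hτ.trans hs.1.le, hs.2⟩
  rw [← integral_sub (hc.integrableOn_Icc.mono_set hsub) (hc'.integrableOn_Icc.mono_set hsub),
    ← Real.norm_eq_abs]
  calc ‖∫ s in Ioc τ t, (c s - c' s)‖ ≤ ∫ s in Ioc τ t, δ s :=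
        norm_integral_le_of_norm_le (hδ.integrableOn_Icc.mono_set hsub)
          (ae_restrict_of_forall_mem measurableSet_Ioc fun s hs => hcc' s (hsub hs))
    _ ≤ ∫ s in Ioc 0 t, δ s :=
        setIntegral_mono_set (hδ.integrableOn_Icc.mono_set Ioc_subset_Icc_self)
          (ae_restrict_of_forall_mem measurableSet_Ioc fun s hs =>
            (abs_nonneg _).trans (hcc' s (Ioc_subset_Icc_self hs)))
          (Ioc_subset_Ioc_left hτ).eventuallyLE

theorem integral_Ioc_nonneg_of_nonneg (hc0 : ∀ τ ∈ Icc 0 t, 0 ≤ c τ) {τ : ℝ} (hτ : 0 ≤ τ) :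
    0 ≤ ∫ s in Ioc τ t, c s :=
  setIntegral_nonneg measurableSet_Ioc fun s hs => hc0 s ⟨hτ.trans hs.1.le, hs.2⟩

theorem abs_integral_Ioc_mul_exp_sub_integral_sub_le {b N M : ℝ} (ht : 0 ≤ t)
    (hg : ContinuousOn g (Icc 0 t)) (hg' : ContinuousOn g' (Icc 0 t))
    (hc : ContinuousOn c (Icc 0 t)) (hc' : ContinuousOn c' (Icc 0 t))
    (hc0 : ∀ τ ∈ Icc 0 t, 0 ≤ c τ) (hc0' : ∀ τ ∈ Icc 0 t, 0 ≤ c' τ)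
    (hgg' : ∀ τ ∈ Icc 0 t, |g τ - g' τ| ≤ L * N) (hg'b : ∀ τ ∈ Icc 0 t, |g' τ| ≤ L * b)
    (hM : ∀ τ ∈ Icc 0 t, |(∫ s in Ioc τ t, c s) - ∫ s in Ioc τ t, c' s| ≤ M) :
    |(∫ τ in Ioc 0 t, g τ * exp (-L * (t - τ) - ∫ s in Ioc τ t, c s)) -
      ∫ τ in Ioc 0 t, g' τ * exp (-L * (t - τ) - ∫ s in Ioc τ t, c' s)|
      ≤ (N + b * M) * (1 - exp (-L * t)) := by
  rw [← integral_sub (integrableOn_Ioc_mul_exp_sub_integral ht hg hc)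
    (integrableOn_Ioc_mul_exp_sub_integral ht hg' hc'), ← integral_Ioc_mul_exp_neg_mul_sub L ht,
    ← integral_const_mul, ← Real.norm_eq_abs]
  refine norm_integral_le_of_norm_le
    ((by fun_prop : Continuous fun τ => (N + b * M) * (L * exp (-L * (t - τ)))).integrableOn_Icc
      |>.mono_set Ioc_subset_Icc_self)
    (ae_restrict_of_forall_mem measurableSet_Ioc fun τ hτ => ?_)
  have hτ : τ ∈ Icc 0 t := Ioc_subset_Icc_self hτ
  rw [Real.norm_eq_abs]
  calc _ ≤ (|g τ - g' τ| + |g' τ| * |(∫ s in Ioc τ t, c s) - ∫ s in Ioc τ t, c' s|) *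
        exp (-L * (t - τ)) :=
        abs_mul_exp_sub_sub_mul_exp_sub_le _ _ _ (integral_Ioc_nonneg_of_nonneg hc0 hτ.1)
          (integral_Ioc_nonneg_of_nonneg hc0' hτ.1)
    _ ≤ (L * N + L * b * M) * exp (-L * (t - τ)) := by
        gcongr
        · exact hgg' τ hτ
        · exact (abs_nonneg _).trans (hg'b τ hτ)
        · exact hg'b τ hτ
        · exact hM τ hτ
    _ = (N + b * M) * (L * exp (-L * (t - τ))) := by ring

theorem abs_duhamel_sub_duhamel_le {ρ b N : ℝ} (ht : 0 ≤ t)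
    (hg : ContinuousOn g (Icc 0 t)) (hg' : ContinuousOn g' (Icc 0 t))
    (hc : ContinuousOn c (Icc 0 t)) (hc' : ContinuousOn c' (Icc 0 t))
    (hδ : ContinuousOn δ (Icc 0 t))
    (hc0 : ∀ τ ∈ Icc 0 t, 0 ≤ c τ) (hc0' : ∀ τ ∈ Icc 0 t, 0 ≤ c' τ) (hρ : |ρ| ≤ b)
    (hgg' : ∀ τ ∈ Icc 0 t, |g τ - g' τ| ≤ L * N) (hg'b : ∀ τ ∈ Icc 0 t, |g' τ| ≤ L * b)
    (hcc' : ∀ τ ∈ Icc 0 t, |c τ - c' τ| ≤ δ τ) :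
    |duhamel L ρ g c t - duhamel L ρ g' c' t| ≤
      b * (∫ τ in Ioc 0 t, δ τ) + N * (1 - exp (-L * t)) := by
  set M := ∫ τ in Ioc 0 t, δ τ
  have hb : 0 ≤ b := (abs_nonneg ρ).trans hρ
  have hM : ∀ τ ∈ Icc 0 t, |(∫ s in Ioc τ t, c s) - ∫ s in Ioc τ t, c' s| ≤ M :=
    fun τ hτ => abs_integral_Ioc_sub_le hc hc' hδ hcc' hτ.1
  have hinitial : |ρ * exp (-L * t - ∫ τ in Ioc 0 t, c τ) - ρ * exp (-L * t - ∫ τ in Ioc 0 t, c' τ)|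
      ≤ b * (exp (-L * t) * M) := by
    rw [← mul_sub, abs_mul]
    refine mul_le_mul hρ ?_ (abs_nonneg _) hb
    refine (abs_exp_sub_sub_exp_sub_le _ (integral_Ioc_nonneg_of_nonneg hc0 le_rfl)
      (integral_Ioc_nonneg_of_nonneg hc0' le_rfl)).trans ?_
    exact mul_le_mul_of_nonneg_left (hM 0 ⟨le_rfl, ht⟩) (exp_pos _).le
  have hsource :=
    abs_integral_Ioc_mul_exp_sub_integral_sub_le ht hg hg' hc hc' hc0 hc0' hgg' hg'b hM
  calc |duhamel L ρ g c t - duhamel L ρ g' c' t|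
      ≤ b * (exp (-L * t) * M) + (N + b * M) * (1 - exp (-L * t)) := by
        refine le_trans (le_of_eq ?_) ((abs_add_le _ _).trans (add_le_add hinitial hsource))
        simp only [duhamel]
        ring_nf
    _ = b * M + N * (1 - exp (-L * t)) := by ring

end Duhamel

theorem Fmap_eq_duhamel {d : ℕ} (m eps0 : ℝ) (ap am ρ0 : Rd d → ℝ) (u : ℝ → Rd d → ℝ) (t : ℝ)
    (x : Rd d) :
    Fmap m eps0 ap am ρ0 u t x = duhamel (m + eps0) (ρ0 x) (fun τ => conv ap (u τ) x)
      (fun τ => exp (eps0 * τ) * conv am (u τ) x) t :=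
  rfl

section Convolution

variable {d : ℕ} {a w w' : Rd d → ℝ}

theorem enorm_conv_le (ha : AEStronglyMeasurable a volume) (w : Rd d → ℝ) (x : Rd d) :
    ‖conv a w x‖ₑ ≤ (∫⁻ z, ‖a z‖ₑ) * eLpNorm w ⊤ volume := by
  have hshift := (Measure.measurePreserving_sub_left volume x).quasiMeasurePreserving
  calc ‖conv a w x‖ₑ ≤ ∫⁻ y, ‖a (x - y) * w y‖ₑ := enorm_integral_le_lintegral_enorm _
    _ ≤ ∫⁻ y, ‖a (x - y)‖ₑ * eLpNorm w ⊤ volume := by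
        refine lintegral_mono_ae ?_
        filter_upwards [enorm_ae_le_eLpNormEssSup w volume] with y hy
        rw [enorm_mul, eLpNorm_exponent_top]
        gcongr
    _ = (∫⁻ z, ‖a z‖ₑ) * eLpNorm w ⊤ volume := by
        rw [lintegral_mul_const'' (f := fun y => ‖a (x - y)‖ₑ) _
            (ha.comp_quasiMeasurePreserving hshift).enorm,
          lintegral_sub_left_eq_self (fun z => ‖a z‖ₑ) x]

theorem abs_conv_le (ha : Integrable a volume) (ha0 : 0 ≤ᵐ[volume] a) {c : ℝ} (hc : 0 ≤ c)
    (hw : eLpNorm w ⊤ volume ≤ ENNReal.ofReal c) (x : Rd d) :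
    |conv a w x| ≤ (∫ z, a z) * c := by
  have hA : 0 ≤ ∫ z, a z := integral_nonneg_of_ae ha0
  have hnorm : ∫ z, ‖a z‖ = ∫ z, a z :=
    integral_congr_ae (ha0.mono fun _ hz => Real.norm_of_nonneg hz)
  have h := enorm_conv_le ha.1 w x
  rw [← ofReal_integral_norm_eq_lintegral_enorm ha, hnorm, Real.enorm_eq_ofReal_abs] at h
  refine (ENNReal.ofReal_le_ofReal_iff (mul_nonneg hA hc)).1 ?_
  rw [ENNReal.ofReal_mul hA]
  exact h.trans (by gcongr)

theorem conv_sub_conv (ha : Integrable a volume) (hw : MemLp w ⊤ volume)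
    (hw' : MemLp w' ⊤ volume) (x : Rd d) :
    conv a w x - conv a w' x = conv a (w - w') x := by
  have hax : Integrable (fun y => a (x - y)) volume := ha.comp_sub_left x
  simp only [conv, Pi.sub_apply, mul_sub]
  exact (integral_sub (hax.mul_of_top_left hw) (hax.mul_of_top_left hw')).symm

theorem conv_nonneg_s11 (ha0 : 0 ≤ᵐ[volume] a) (hw0 : 0 ≤ᵐ[volume] w) (x : Rd d) :
    0 ≤ conv a w x :=
  integral_nonneg_of_ae <| by
    filter_upwards [(Measure.measurePreserving_sub_left volume x).quasiMeasurePreserving.ae ha0,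
      hw0] with y h1 h2 using mul_nonneg h1 h2

end Convolution

structure IsBoundedNonnegCurve {d : ℕ} (T b : ℝ) (u : ℝ → Rd d → ℝ) : Prop where
  aestronglyMeasurable : ∀ t ∈ Icc (0 : ℝ) T, AEStronglyMeasurable (u t) volume
  nonneg : ∀ t ∈ Icc (0 : ℝ) T, ∀ᵐ x ∂volume, 0 ≤ u t x
  eLpNorm_le : ∀ t ∈ Icc (0 : ℝ) T, eLpNorm (u t) ⊤ volume ≤ ENNReal.ofReal b
  tendsto_eLpNorm_sub : ∀ t ∈ Icc (0 : ℝ) T,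
    Tendsto (fun s => eLpNorm (u s - u t) ⊤ volume) (𝓝[Icc (0 : ℝ) T] t) (𝓝 0)

namespace IsBoundedNonnegCurve

variable {d : ℕ} {T b : ℝ} {u v : ℝ → Rd d → ℝ}

theorem memLp (hu : IsBoundedNonnegCurve T b u) {t : ℝ} (ht : t ∈ Icc 0 T) :
    MemLp (u t) ⊤ volume :=
  ⟨hu.aestronglyMeasurable t ht, (hu.eLpNorm_le t ht).trans_lt ENNReal.ofReal_lt_top⟩

theorem continuousOn_conv (hu : IsBoundedNonnegCurve T b u) {a : Rd d → ℝ}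
    (ha : Integrable a volume) (x : Rd d) :
    ContinuousOn (fun τ => conv a (u τ) x) (Icc 0 T) := by
  intro τ hτ
  rw [ContinuousWithinAt, tendsto_iff_edist_tendsto_0]
  have hlim := ENNReal.Tendsto.const_mul (hu.tendsto_eLpNorm_sub τ hτ)
    (Or.inr ha.hasFiniteIntegral.ne)
  rw [mul_zero] at hlim
  refine tendsto_of_tendsto_of_tendsto_of_le_of_le' tendsto_const_nhds hlim
    (Eventually.of_forall fun _ => zero_le) ?_
  filter_upwards [self_mem_nhdsWithin] with s hs
  rw [edist_eq_enorm_sub, conv_sub_conv ha (hu.memLp hs) (hu.memLp hτ)]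
  exact enorm_conv_le ha.1 _ x

theorem iSup_eLpNorm_sub_ne_top (hu : IsBoundedNonnegCurve T b u)
    (hv : IsBoundedNonnegCurve T b v) :
    (⨆ t ∈ Icc (0 : ℝ) T, eLpNorm (u t - v t) ⊤ volume) ≠ ⊤ :=
  ne_top_of_le_ne_top (ENNReal.add_ne_top.2 ⟨ENNReal.ofReal_ne_top, ENNReal.ofReal_ne_top⟩)
    (iSup₂_le fun t ht =>
      (eLpNorm_sub_le (hu.aestronglyMeasurable t ht) (hv.aestronglyMeasurable t ht) le_top).trans
        (add_le_add (hu.eLpNorm_le t ht) (hv.eLpNorm_le t ht)))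

end IsBoundedNonnegCurve

def contractionFactor (b A ε L T : ℝ) : ℝ :=
  b * A * (∫ s in Ioc 0 T, exp (ε * s)) + (1 - exp (-L * T))

theorem exists_pos_forall_Ioc_contractionFactor_lt_one (b A ε L : ℝ) :
    ∃ T₁ > 0, ∀ T ∈ Ioc 0 T₁, contractionFactor b A ε L T < 1 := by
  have hcont : Continuous fun T => b * A * (∫ s in (0)..T, exp (ε * s)) + (1 - exp (-L * T)) := by
    have hprimitive := intervalIntegral.continuous_primitive
      (fun _ _ => (by fun_prop : Continuous fun s => exp (ε * s)).intervalIntegrable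
        (μ := volume) _ _) 0
    fun_prop
  have hlim : Tendsto (fun T => b * A * (∫ s in (0)..T, exp (ε * s)) + (1 - exp (-L * T)))
      (𝓝 0) (𝓝 0) := by
    simpa using hcont.tendsto 0
  have hsmall : ∀ᶠ T in 𝓝[>] 0, contractionFactor b A ε L T < 1 := by
    filter_upwards [nhdsWithin_le_nhds (hlim.eventually (gt_mem_nhds one_pos)),
      self_mem_nhdsWithin] with T hT hT0
    rwa [contractionFactor, ← intervalIntegral.integral_of_le (le_of_lt hT0)]
  exact mem_nhdsGT_iff_exists_Ioc_subset.1 hsmall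

theorem abs_Fmap_sub_Fmap_le {d : ℕ} {m eps0 T b N t : ℝ} {ap am ρ0 : Rd d → ℝ}
    {u v : ℝ → Rd d → ℝ} (hap : Integrable ap volume) (ham : Integrable am volume)
    (hap0 : 0 ≤ᵐ[volume] ap) (ham0 : 0 ≤ᵐ[volume] am) (hapL : ∫ z, ap z ≤ m + eps0)
    (hN : 0 ≤ N) (hu : IsBoundedNonnegCurve T b u) (hv : IsBoundedNonnegCurve T b v)
    (huv : ∀ τ ∈ Icc 0 T, eLpNorm (u τ - v τ) ⊤ volume ≤ ENNReal.ofReal N)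
    (ht : t ∈ Icc 0 T) {x : Rd d} (hρ : |ρ0 x| ≤ b) :
    |Fmap m eps0 ap am ρ0 u t x - Fmap m eps0 ap am ρ0 v t x| ≤
      contractionFactor b (∫ z, am z) eps0 (m + eps0) T * N := by
  obtain ⟨ht0, htT⟩ := ht
  have hsub : Icc 0 t ⊆ Icc 0 T := Icc_subset_Icc le_rfl htT
  have hL : 0 ≤ m + eps0 := (integral_nonneg_of_ae hap0).trans hapL
  have hb : 0 ≤ b := (abs_nonneg _).trans hρ
  have hAm : 0 ≤ ∫ z, am z := integral_nonneg_of_ae ham0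
  have hexp : Continuous fun τ => exp (eps0 * τ) := by fun_prop
  have hdiff : ∀ {a : Rd d → ℝ}, Integrable a volume → 0 ≤ᵐ[volume] a → ∀ τ ∈ Icc 0 t,
      |conv a (u τ) x - conv a (v τ) x| ≤ (∫ z, a z) * N := fun ha ha0 τ hτ => by
    rw [conv_sub_conv ha (hu.memLp (hsub hτ)) (hv.memLp (hsub hτ))]
    exact abs_conv_le ha ha0 hN (huv τ (hsub hτ)) x
  have key := abs_duhamel_sub_duhamel_le (L := m + eps0) (ρ := ρ0 x) (N := N)
    (c := fun τ => exp (eps0 * τ) * conv am (u τ) x)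
    (c' := fun τ => exp (eps0 * τ) * conv am (v τ) x)
    (δ := fun τ => exp (eps0 * τ) * ((∫ z, am z) * N)) ht0
    ((hu.continuousOn_conv hap x).mono hsub) ((hv.continuousOn_conv hap x).mono hsub)
    ((hexp.continuousOn.mul (hu.continuousOn_conv ham x)).mono hsub)
    ((hexp.continuousOn.mul (hv.continuousOn_conv ham x)).mono hsub) (by fun_prop)
    (fun τ hτ => mul_nonneg (exp_pos _).le (conv_nonneg_s11 ham0 (hu.nonneg τ (hsub hτ)) x))
    (fun τ hτ => mul_nonneg (exp_pos _).le (conv_nonneg_s11 ham0 (hv.nonneg τ (hsub hτ)) x)) hρ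
    (fun τ hτ => (hdiff hap hap0 τ hτ).trans (mul_le_mul_of_nonneg_right hapL hN))
    (fun τ hτ => (abs_conv_le hap hap0 hb (hv.eLpNorm_le τ (hsub hτ)) x).trans
      (mul_le_mul_of_nonneg_right hapL hb))
    (fun τ hτ => by
      rw [← mul_sub, abs_mul, abs_of_pos (exp_pos _)]
      exact mul_le_mul_of_nonneg_left (hdiff ham ham0 τ hτ) (exp_pos _).le)
  have hIt : ∫ s in Ioc 0 t, exp (eps0 * s) ≤ ∫ s in Ioc 0 T, exp (eps0 * s) :=
    setIntegral_mono_set (hexp.continuousOn.integrableOn_Icc.mono_set Ioc_subset_Icc_self)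
      (Eventually.of_forall fun _ => (exp_pos _).le) (Ioc_subset_Ioc_right htT).eventuallyLE
  have hdecay : exp (-(m + eps0) * T) ≤ exp (-(m + eps0) * t) :=
    exp_le_exp.2 (by nlinarith)
  rw [Fmap_eq_duhamel, Fmap_eq_duhamel]
  refine key.trans ?_
  rw [integral_mul_const, contractionFactor]
  calc b * ((∫ s in Ioc 0 t, exp (eps0 * s)) * ((∫ z, am z) * N)) +
        N * (1 - exp (-(m + eps0) * t))
      ≤ b * ((∫ s in Ioc 0 T, exp (eps0 * s)) * ((∫ z, am z) * N)) +
        N * (1 - exp (-(m + eps0) * T)) := by gcongr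
    _ = _ := by ring

theorem statement11_general
    (d : ℕ) (m : ℝ)
    (aplus aminus : Rd d → ℝ)
    (hap_int : Integrable aplus volume) (ham_int : Integrable aminus volume)
    (hap_pos : ∀ᵐ x ∂volume, 0 ≤ aplus x)
    (ham_pos : ∀ᵐ x ∂volume, 0 ≤ aminus x)
    (eps0 : ℝ) (heps0 : eps0 = max ((∫ x, aplus x) - m) 0)
    (T : ℝ) (b : ℝ)
    (ρ0 : Rd d → ℝ)
    (hρ0_pos : ∀ᵐ x ∂volume, 0 ≤ ρ0 x)
    (hρ0_bdd : ∀ᵐ x ∂volume, ρ0 x ≤ b)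
    (u v : ℝ → Rd d → ℝ)
    (hu_meas : ∀ t ∈ Set.Icc (0 : ℝ) T, AEStronglyMeasurable (u t) volume)
    (hu_pos : ∀ t ∈ Set.Icc (0 : ℝ) T, ∀ᵐ x ∂volume, 0 ≤ u t x)
    (hu_bdd : ∀ t ∈ Set.Icc (0 : ℝ) T, eLpNorm (u t) ⊤ volume ≤ ENNReal.ofReal b)
    (hu_cont : ∀ t ∈ Set.Icc (0 : ℝ) T,
      Tendsto (fun s : ℝ => eLpNorm (u s - u t) ⊤ volume) (𝓝[Set.Icc (0 : ℝ) T] t) (𝓝 0))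
    (hv_meas : ∀ t ∈ Set.Icc (0 : ℝ) T, AEStronglyMeasurable (v t) volume)
    (hv_pos : ∀ t ∈ Set.Icc (0 : ℝ) T, ∀ᵐ x ∂volume, 0 ≤ v t x)
    (hv_bdd : ∀ t ∈ Set.Icc (0 : ℝ) T, eLpNorm (v t) ⊤ volume ≤ ENNReal.ofReal b)
    (hv_cont : ∀ t ∈ Set.Icc (0 : ℝ) T,
      Tendsto (fun s : ℝ => eLpNorm (v s - v t) ⊤ volume) (𝓝[Set.Icc (0 : ℝ) T] t) (𝓝 0))
 :
    (⨆ t ∈ Set.Icc (0 : ℝ) T,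
        eLpNorm (Fmap m eps0 aplus aminus ρ0 u t - Fmap m eps0 aplus aminus ρ0 v t) ⊤ volume) ≤
      ENNReal.ofReal
          (b * (∫ x, aminus x) * (∫ s in Set.Ioc (0 : ℝ) T, Real.exp (eps0 * s)) +
            (1 - Real.exp (-(m + eps0) * T))) *
        ⨆ t ∈ Set.Icc (0 : ℝ) T, eLpNorm (u t - v t) ⊤ volume ∧
    ∃ T₁ > (0 : ℝ), ∀ T' ∈ Set.Ioc (0 : ℝ) T₁,
      b * (∫ x, aminus x) * (∫ s in Set.Ioc (0 : ℝ) T', Real.exp (eps0 * s)) +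
          (1 - Real.exp (-(m + eps0) * T')) < 1 := by
  refine ⟨?_, exists_pos_forall_Ioc_contractionFactor_lt_one _ _ _ _⟩
  have hu : IsBoundedNonnegCurve T b u := ⟨hu_meas, hu_pos, hu_bdd, hu_cont⟩
  have hv : IsBoundedNonnegCurve T b v := ⟨hv_meas, hv_pos, hv_bdd, hv_cont⟩
  have hapL : ∫ x, aplus x ≤ m + eps0 := by
    rw [heps0]
    linarith [le_max_left ((∫ x, aplus x) - m) 0]
  obtain ⟨N, hN, hS⟩ : ∃ N, 0 ≤ N ∧
      (⨆ t ∈ Icc (0 : ℝ) T, eLpNorm (u t - v t) ⊤ volume) = ENNReal.ofReal N :=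
    ⟨_, ENNReal.toReal_nonneg, (ENNReal.ofReal_toReal (hu.iSup_eLpNorm_sub_ne_top hv)).symm⟩
  have huv : ∀ τ ∈ Icc 0 T, eLpNorm (u τ - v τ) ⊤ volume ≤ ENNReal.ofReal N :=
    fun τ hτ => hS ▸ le_biSup (fun t => eLpNorm (u t - v t) ⊤ volume) hτ
  rw [hS, ← ENNReal.ofReal_mul' hN]
  refine iSup₂_le fun t ht => ?_
  rw [eLpNorm_exponent_top]
  refine eLpNormEssSup_le_of_ae_bound ?_
  filter_upwards [hρ0_pos, hρ0_bdd] with x h0 h1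
  exact abs_Fmap_sub_Fmap_le hap_int ham_int hap_pos ham_pos hapL hN hu hv huv ht
    (abs_le.2 ⟨by linarith, h1⟩)

theorem statement11
    (d : ℕ) (hd : 1 ≤ d) (m : ℝ) (hm : 0 ≤ m)
    (aplus aminus : Rd d → ℝ)
    (hap_int : Integrable aplus volume) (ham_int : Integrable aminus volume)
    (hap_bdd : eLpNorm aplus ⊤ volume < ⊤) (ham_bdd : eLpNorm aminus ⊤ volume < ⊤)
    (hap_even : ∀ᵐ x ∂volume, aplus (-x) = aplus x)
    (ham_even : ∀ᵐ x ∂volume, aminus (-x) = aminus x)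
    (hap_pos : ∀ᵐ x ∂volume, 0 ≤ aplus x)
    (ham_pos : ∀ᵐ x ∂volume, 0 ≤ aminus x)
    (eps0 : ℝ) (heps0 : eps0 = max ((∫ x, aplus x) - m) 0)
    (hpos : 0 < m + eps0)
    (T : ℝ) (hT : 0 < T) (b : ℝ) (hb : 0 < b)
    (ρ0 : Rd d → ℝ) (hρ0_meas : AEStronglyMeasurable ρ0 volume)
    (hρ0_pos : ∀ᵐ x ∂volume, 0 ≤ ρ0 x)
    (hρ0_bdd : ∀ᵐ x ∂volume, ρ0 x ≤ b)
    (u v : ℝ → Rd d → ℝ)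
    (hu_meas : ∀ t ∈ Set.Icc (0 : ℝ) T, AEStronglyMeasurable (u t) volume)
    (hu_pos : ∀ t ∈ Set.Icc (0 : ℝ) T, ∀ᵐ x ∂volume, 0 ≤ u t x)
    (hu_bdd : ∀ t ∈ Set.Icc (0 : ℝ) T, eLpNorm (u t) ⊤ volume ≤ ENNReal.ofReal b)
    (hu_cont : ∀ t ∈ Set.Icc (0 : ℝ) T,
      Tendsto (fun s : ℝ => eLpNorm (u s - u t) ⊤ volume) (𝓝[Set.Icc (0 : ℝ) T] t) (𝓝 0))
    (hv_meas : ∀ t ∈ Set.Icc (0 : ℝ) T, AEStronglyMeasurable (v t) volume)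
    (hv_pos : ∀ t ∈ Set.Icc (0 : ℝ) T, ∀ᵐ x ∂volume, 0 ≤ v t x)
    (hv_bdd : ∀ t ∈ Set.Icc (0 : ℝ) T, eLpNorm (v t) ⊤ volume ≤ ENNReal.ofReal b)
    (hv_cont : ∀ t ∈ Set.Icc (0 : ℝ) T,
      Tendsto (fun s : ℝ => eLpNorm (v s - v t) ⊤ volume) (𝓝[Set.Icc (0 : ℝ) T] t) (𝓝 0))
 :
    (⨆ t ∈ Set.Icc (0 : ℝ) T,
        eLpNorm (Fmap m eps0 aplus aminus ρ0 u t - Fmap m eps0 aplus aminus ρ0 v t) ⊤ volume) ≤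
      ENNReal.ofReal
          (b * (∫ x, aminus x) * (∫ s in Set.Ioc (0 : ℝ) T, Real.exp (eps0 * s)) +
            (1 - Real.exp (-(m + eps0) * T))) *
        ⨆ t ∈ Set.Icc (0 : ℝ) T, eLpNorm (u t - v t) ⊤ volume ∧
    ∃ T₁ > (0 : ℝ), ∀ T' ∈ Set.Ioc (0 : ℝ) T₁,
      b * (∫ x, aminus x) * (∫ s in Set.Ioc (0 : ℝ) T', Real.exp (eps0 * s)) +
          (1 - Real.exp (-(m + eps0) * T')) < 1 :=
  statement11_general d m aplus aminus hap_int ham_int hap_pos ham_pos eps0 heps0 T b ρ0 hρ0_pos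
    hρ0_bdd u v hu_meas hu_pos hu_bdd hu_cont hv_meas hv_pos hv_bdd hv_cont
end
end

section
/- The function g is non-increasing on (0, +∞) and lim_{θ → +∞} g(θ) = ∫_{{x ∈ ℝ^d : a⁻(x) = 0}} a⁺(x) dx. -/
open MeasureTheory Filter Set Topology
open scoped ENNReal

noncomputable section

/-- `Υ_θ = {x : a⁺(x) > θ a⁻(x)}` -/
def Ups {d : ℕ} (ap am : Rd d → ℝ) (θ : ℝ) : Set (Rd d) := {x | θ * am x < ap x}

/-- `g(θ) = f⁺(θ) − θ f⁻(θ)` where `f^±(θ) = ∫_{Υ_θ} a^±(x) dx` -/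
def gfun {d : ℕ} (ap am : Rd d → ℝ) (θ : ℝ) : ℝ :=
  (∫ x in Ups ap am θ, ap x) - θ * ∫ x in Ups ap am θ, am x

theorem statement14
    (d : ℕ) (hd : 1 ≤ d)
    (aplus aminus : Rd d → ℝ)
    (hap_int : Integrable aplus volume) (ham_int : Integrable aminus volume)
    (hap_bdd : eLpNorm aplus ⊤ volume < ⊤) (ham_bdd : eLpNorm aminus ⊤ volume < ⊤)
    (hap_even : ∀ᵐ x ∂volume, aplus (-x) = aplus x)
    (ham_even : ∀ᵐ x ∂volume, aminus (-x) = aminus x)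
    (hap_pos : ∀ᵐ x ∂volume, 0 ≤ aplus x)
    (ham_pos : ∀ᵐ x ∂volume, 0 ≤ aminus x)
    (hap_meas : Measurable aplus) (ham_meas : Measurable aminus)
 :
    AntitoneOn (gfun aplus aminus) (Set.Ioi 0) ∧
      Tendsto (gfun aplus aminus) atTop
        (𝓝 (∫ x in {x : Rd d | aminus x = 0}, aplus x)) := by
  have hUmeas : ∀ θ : ℝ, MeasurableSet (Ups aplus aminus θ) := fun θ =>
    measurableSet_lt (ham_meas.const_mul θ) hap_meas
  have key : ∀ θ : ℝ, gfun aplus aminus θ = ∫ x, max (aplus x - θ * aminus x) 0 := by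
    intro θ
    have h1 : ∀ x, (Ups aplus aminus θ).indicator (fun x => aplus x - θ * aminus x) x
        = max (aplus x - θ * aminus x) 0 := by
      intro x
      by_cases hx : x ∈ Ups aplus aminus θ
      · rw [indicator_of_mem hx, max_eq_left (le_of_lt (sub_pos.mpr hx))]
      · rw [indicator_of_notMem hx]
        exact (max_eq_right (sub_nonpos.mpr (not_lt.mp hx))).symm
    have e1 : ∫ x in Ups aplus aminus θ, (aplus x - θ * aminus x)
        = (∫ x in Ups aplus aminus θ, aplus x) - θ * ∫ x in Ups aplus aminus θ, aminus x := by
      rw [integral_sub hap_int.restrict ((ham_int.const_mul θ).restrict),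
        integral_const_mul]
    rw [gfun, ← e1, ← integral_indicator (hUmeas θ)]
    exact congrArg _ (funext h1)
  have hint : ∀ θ : ℝ, Integrable (fun x => max (aplus x - θ * aminus x) 0) volume :=
    fun θ => (hap_int.sub (ham_int.const_mul θ)).pos_part
  constructor
  · intro θ1 h1 θ2 h2 h12
    rw [key θ1, key θ2]
    refine integral_mono_ae (hint θ2) (hint θ1) ?_
    filter_upwards [ham_pos] with x hx
    exact max_le_max (by nlinarith) le_rfl
  · have hzero : MeasurableSet {x : Rd d | aminus x = 0} :=
      ham_meas (measurableSet_singleton 0)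
    rw [← integral_indicator hzero, funext key]
    refine tendsto_integral_filter_of_dominated_convergence (fun x => |aplus x|)
      ?_ ?_ hap_int.abs ?_
    · exact Eventually.of_forall fun θ =>
        ((hap_meas.sub (ham_meas.const_mul θ)).max measurable_const).aestronglyMeasurable
    · filter_upwards [eventually_ge_atTop (0 : ℝ)] with θ hθ
      filter_upwards [ham_pos] with x hm
      rw [Real.norm_eq_abs, abs_of_nonneg (le_max_right _ _)]
      exact max_le (by nlinarith [le_abs_self (aplus x)]) (abs_nonneg _)
    · filter_upwards [ham_pos, hap_pos] with x hm hp
      by_cases h0 : aminus x = 0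
      · have : ({x : Rd d | aminus x = 0}).indicator aplus x = aplus x :=
          indicator_of_mem (show x ∈ {y : Rd d | aminus y = 0} from h0) aplus
        rw [this]
        simpa [h0, max_eq_left hp] using (tendsto_const_nhds :
          Tendsto (fun _ : ℝ => aplus x) atTop (𝓝 (aplus x)))
      · have hmx : 0 < aminus x := lt_of_le_of_ne hm (Ne.symm h0)
        have : ({x : Rd d | aminus x = 0}).indicator aplus x = 0 :=
          indicator_of_notMem (show x ∉ {y : Rd d | aminus y = 0} from h0) aplus
        rw [this]
        refine Tendsto.congr' ?_ (tendsto_const_nhds :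
          Tendsto (fun _ : ℝ => (0 : ℝ)) atTop (𝓝 0))
        filter_upwards [eventually_ge_atTop (aplus x / aminus x)] with θ hθ
        have h2 : aplus x ≤ θ * aminus x := by
          rw [div_le_iff₀ hmx] at hθ; linarith
        exact (max_eq_right (sub_nonpos.mpr h2)).symm
end
end
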